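/- arXiv:1209.1648 — 7 statements merged into one kernel-verified Lean document; each statement's English description precedes it below -/
import Mathlib

section
/- Let x_0 = x₀ and, for i = 1,…,N, let x_i minimize x ↦ E(t_i,x) + Ψ(x − x_{i−1}) over the closed ball {x : ‖x − x_{i−1}‖ ≤ ε}, where t_i = iτ. Then for every n ∈ {1,…,N}: E(t_n, x_n) ≤ E(0,x₀)·e^{λ t_n} and E(0, x_n) ≤ E(0,x₀)·e^{2λ t_n}. -/
open Filter MeasureTheory Set
open scoped Topology NNReal

section Setup

variable {X : Type*} [NormedAddCommGroup X] [NormedSpace ℝ X]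

/-- The set of partition sums defining the `Ψ`-dissipation of `u` on `[a,b]`:
sums `∑ Ψ(u(s_i) − u(s_{i−1}))` over finite strictly increasing partitions
`a = s₀ < s₁ < ⋯ < s_n = b`. -/
def dissSums (Ψ : X → ℝ) (u : ℝ → X) (a b : ℝ) : Set ℝ :=
  { S | ∃ (n : ℕ) (σ : Fin (n + 1) → ℝ), StrictMono σ ∧ σ 0 = a ∧ σ (Fin.last n) = b ∧
      S = ∑ i : Fin n, Ψ (u (σ i.succ) - u (σ i.castSucc)) }

/-- The `Ψ`-dissipation `Diss_Ψ(u;[a,b])`. -/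
noncomputable def dissTV (Ψ : X → ℝ) (u : ℝ → X) (a b : ℝ) : ℝ :=
  sSup (dissSums Ψ u a b)

/-- The subdifferential `∂Ψ(0) = {η : ⟨η,v⟩ ≤ Ψ(v) for all v}`. -/
def subdiffZero (Ψ : X → ℝ) : Set (X →L[ℝ] ℝ) :=
  { η | ∀ v, η v ≤ Ψ v }

/-- `inf_{η ∈ ∂Ψ(0)} ‖ξ + η‖_*`, where `‖·‖_*` is the dual (operator) norm. -/
noncomputable def distToSubdiff (Ψ : X → ℝ) (ξ : X →L[ℝ] ℝ) : ℝ :=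
  sInf ((fun η => ‖ξ + η‖) '' subdiffZero Ψ)

/-- The cost `Δ_new(t;a,b)`: infimum over Lipschitz paths `γ : [0,1] → X` with
`γ(0)=a`, `γ(1)=b` of `∫₀¹ Ψ(γ'(s)) + (inf_{z∈∂Ψ(0)} ‖D_xE(t,γ(s))+z‖_*)·‖γ'(s)‖ ds`. -/
noncomputable def deltaNew (DE : ℝ → X → X →L[ℝ] ℝ) (Ψ : X → ℝ) (t : ℝ) (a b : X) : ℝ :=
  sInf { c | ∃ (K : ℝ≥0) (γ : ℝ → X), LipschitzOnWith K γ (Icc 0 1) ∧ γ 0 = a ∧ γ 1 = b ∧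
      c = ∫ s in (0:ℝ)..1, (Ψ (deriv γ s) + distToSubdiff Ψ (DE t (γ s)) * ‖deriv γ s‖) }

/-- The new dissipation `Diss_new(u;[t₁,t₂])`, with prescribed one-sided limit
functions `uL`, `uR`, summing over the jump set the corrections `Δ_new − Ψ`. -/
noncomputable def dissNew (DE : ℝ → X → X →L[ℝ] ℝ) (Ψ : X → ℝ)
    (u uL uR : ℝ → X) (t₁ t₂ : ℝ) : ℝ :=
  dissTV Ψ u t₁ t₂
    + ∑' t : ({ s | ¬ ContinuousAt u s } ∩ Ioo t₁ t₂ : Set ℝ),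
        (deltaNew DE Ψ (t : ℝ) (uL (t : ℝ)) (u (t : ℝ)) +
          deltaNew DE Ψ (t : ℝ) (u (t : ℝ)) (uR (t : ℝ))
          - Ψ (u (t : ℝ) - uL (t : ℝ)) - Ψ (uR (t : ℝ) - u (t : ℝ)))
    + (deltaNew DE Ψ t₁ (u t₁) (uR t₁) - Ψ (uR t₁ - u t₁))
    + (deltaNew DE Ψ t₂ (uL t₂) (u t₂) - Ψ (u t₂ - uL t₂))

/-- `pts` is a discretized solution with initial datum `x₀`, neighborhood size `ε`,
time-step `τ` and `N` steps: `pts 0 = x₀` and each `pts i` minimizes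
`x ↦ E(iτ, x) + Ψ(x − pts (i−1))` over the closed ball of radius `ε` around `pts (i−1)`. -/
def IsDiscreteSol (E : ℝ → X → ℝ) (Ψ : X → ℝ) (x₀ : X) (ε τ : ℝ) (N : ℕ)
    (pts : ℕ → X) : Prop :=
  pts 0 = x₀ ∧ ∀ i : ℕ, 1 ≤ i → i ≤ N →
    ‖pts i - pts (i - 1)‖ ≤ ε ∧
    ∀ x : X, ‖x - pts (i - 1)‖ ≤ ε →
      E ((i : ℝ) * τ) (pts i) + Ψ (pts i - pts (i - 1)) ≤
        E ((i : ℝ) * τ) x + Ψ (x - pts (i - 1))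

/-- The piecewise-constant interpolant `x^{ε,τ}`: equal to `pts (i−1)` on
`[(i−1)τ, iτ)` for `i = 1,…,N`, and to `pts N` on `[Nτ, T]`. -/
noncomputable def discInterp (pts : ℕ → X) (τ : ℝ) (N : ℕ) (t : ℝ) : X :=
  pts (min N ⌊t / τ⌋₊)

end Setup

lemma gron_aux {f f' : ℝ → ℝ} {lam : ℝ} (hlam : 0 ≤ lam) {a b : ℝ} (hab : a ≤ b)
    (hf : ∀ t ∈ Set.Icc a b, HasDerivWithinAt f (f' t) (Set.Icc a b) t)
    (hnn : ∀ t ∈ Set.Icc a b, 0 ≤ f t)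
    (hbd : ∀ t ∈ Set.Icc a b, |f' t| ≤ lam * f t) :
    f b ≤ f a * Real.exp (lam * (b - a)) := by
  have hc : ContinuousOn f (Set.Icc a b) := fun t ht => (hf t ht).continuousWithinAt
  have h' : ∀ t ∈ Set.Ico a b, HasDerivWithinAt f (f' t) (Set.Ici t) t := fun t ht =>
    (hf t (Set.Ico_subset_Icc_self ht)).mono_of_mem_nhdsWithin (Icc_mem_nhdsGE_of_mem ht)
  have hb : ∀ t ∈ Set.Ico a b, ‖f' t‖ ≤ lam * ‖f t‖ + 0 := by
    intro t ht
    rw [Real.norm_eq_abs, Real.norm_eq_abs, abs_of_nonneg (hnn t (Set.Ico_subset_Icc_self ht)),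
      add_zero]
    exact hbd t (Set.Ico_subset_Icc_self ht)
  have := norm_le_gronwallBound_of_norm_deriv_right_le hc h'
    (le_of_eq (Real.norm_of_nonneg (hnn a ⟨le_refl a, hab⟩))) hb b ⟨hab, le_refl b⟩
  rw [gronwallBound_ε0, Real.norm_eq_abs] at this
  exact (le_abs_self (f b)).trans this

lemma gron_aux2 {f f' : ℝ → ℝ} {lam : ℝ} (hlam : 0 ≤ lam) {a b : ℝ} (hab : a ≤ b)
    (hf : ∀ t ∈ Set.Icc a b, HasDerivWithinAt f (f' t) (Set.Icc a b) t)
    (hnn : ∀ t ∈ Set.Icc a b, 0 ≤ f t)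
    (hbd : ∀ t ∈ Set.Icc a b, |f' t| ≤ lam * f t) :
    f a ≤ f b * Real.exp (lam * (b - a)) := by
  have key := gron_aux (f := fun s => f (a + b - s)) (f' := fun s => f' (a + b - s) * (-1))
    hlam hab (a := a) (b := b) ?_ ?_ ?_
  · simpa using key
  · intro s hs
    have hmem : a + b - s ∈ Set.Icc a b := ⟨by linarith [hs.2], by linarith [hs.1]⟩
    have h1 : HasDerivWithinAt (fun s : ℝ => a + b - s) (-1) (Set.Icc a b) s := by
      simpa using (hasDerivWithinAt_id s (Set.Icc a b)).const_sub (a + b)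
    exact (hf _ hmem).comp s h1 (fun y hy => ⟨by linarith [hy.2], by linarith [hy.1]⟩)
  · intro s hs
    exact hnn _ ⟨by linarith [hs.2], by linarith [hs.1]⟩
  · intro s hs
    have hmem : a + b - s ∈ Set.Icc a b := ⟨by linarith [hs.2], by linarith [hs.1]⟩
    simpa [abs_mul] using hbd _ hmem

theorem stmt_2
    {X : Type*} [NormedAddCommGroup X] [NormedSpace ℝ X] [FiniteDimensional ℝ X]
    [Nontrivial X]
    (T : ℝ) (hT : 0 < T)
    (E Et : ℝ → X → ℝ) (DE : ℝ → X → X →L[ℝ] ℝ)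
    (hEnn : ∀ t ∈ Set.Icc (0:ℝ) T, ∀ x : X, 0 ≤ E t x)
    (hEt : ∀ x : X, ∀ t ∈ Set.Icc (0:ℝ) T,
      HasDerivWithinAt (fun s => E s x) (Et t x) (Set.Icc 0 T) t)
    (hDE : ∀ t ∈ Set.Icc (0:ℝ) T, ∀ x : X, HasFDerivAt (fun y => E t y) (DE t x) x)
    (hEtc : ContinuousOn (fun p : ℝ × X => Et p.1 p.2) (Set.Icc 0 T ×ˢ Set.univ))
    (hDEc : ContinuousOn (fun p : ℝ × X => DE p.1 p.2) (Set.Icc 0 T ×ˢ Set.univ))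
    (lam : ℝ) (hlam : 0 ≤ lam)
    (hEbound : ∀ s ∈ Set.Icc (0:ℝ) T, ∀ x : X, |Et s x| ≤ lam * E s x)
    (Ψ : X → ℝ) (hΨnn : ∀ v, 0 ≤ Ψ v) (hΨconv : ConvexOn ℝ Set.univ Ψ)
    (hΨhom : ∀ c : ℝ, 0 ≤ c → ∀ v : X, Ψ (c • v) = c * Ψ v)
    (hΨpos : ∀ v : X, v ≠ 0 → 0 < Ψ v)
    (x₀ : X) (ε τ : ℝ) (hε : 0 < ε) (hτ : 0 < τ)
    (N : ℕ) (hNT : (N : ℝ) * τ ≤ T ∧ T < ((N : ℝ) + 1) * τ)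
    (pts : ℕ → X) (hsol : IsDiscreteSol E Ψ x₀ ε τ N pts) :
    ∀ n : ℕ, 1 ≤ n → n ≤ N →
      E ((n : ℝ) * τ) (pts n) ≤ E 0 x₀ * Real.exp (lam * ((n : ℝ) * τ)) ∧
      E 0 (pts n) ≤ E 0 x₀ * Real.exp (2 * lam * ((n : ℝ) * τ)) := by
  have hΨ0 : Ψ 0 = 0 := by simpa using hΨhom 0 le_rfl 0
  -- minimization step: E(iτ, xᵢ) ≤ E(iτ, x_{i-1})
  have hmin : ∀ i : ℕ, 1 ≤ i → i ≤ N →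
      E ((i : ℝ) * τ) (pts i) ≤ E ((i : ℝ) * τ) (pts (i - 1)) := by
    intro i h1 h2
    obtain ⟨-, hm⟩ := hsol.2 i h1 h2
    have := hm (pts (i - 1)) (by simp [hε.le])
    rw [sub_self, hΨ0, add_zero] at this
    linarith [hΨnn (pts i - pts (i - 1))]
  -- Gronwall comparisons
  have keyF : ∀ (x : X) (a b : ℝ), 0 ≤ a → a ≤ b → b ≤ T →
      E b x ≤ E a x * Real.exp (lam * (b - a)) := by
    intro x a b ha hab hb
    have hsub : Set.Icc a b ⊆ Set.Icc (0:ℝ) T := Set.Icc_subset_Icc ha hb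
    exact gron_aux hlam hab
      (fun t ht => (hEt x t (hsub ht)).mono hsub)
      (fun t ht => hEnn t (hsub ht) x)
      (fun t ht => hEbound t (hsub ht) x)
  have keyB : ∀ (x : X) (a b : ℝ), 0 ≤ a → a ≤ b → b ≤ T →
      E a x ≤ E b x * Real.exp (lam * (b - a)) := by
    intro x a b ha hab hb
    have hsub : Set.Icc a b ⊆ Set.Icc (0:ℝ) T := Set.Icc_subset_Icc ha hb
    exact gron_aux2 hlam hab
      (fun t ht => (hEt x t (hsub ht)).mono hsub)
      (fun t ht => hEnn t (hsub ht) x)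
      (fun t ht => hEbound t (hsub ht) x)
  have hNτ : (N : ℝ) * τ ≤ T := hNT.1
  have hstepT : ∀ k : ℕ, k ≤ N → (k : ℝ) * τ ≤ T := by
    intro k hk
    refine le_trans ?_ hNτ
    have : (k : ℝ) ≤ N := Nat.cast_le.mpr hk
    nlinarith
  have main : ∀ n : ℕ, n ≤ N →
      E ((n : ℝ) * τ) (pts n) ≤ E 0 x₀ * Real.exp (lam * ((n : ℝ) * τ)) := by
    intro n
    induction n with
    | zero => simp [hsol.1]
    | succ k ih =>
      intro hkN
      have ihk := ih (Nat.le_of_succ_le hkN)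
      have hknn : (0:ℝ) ≤ (k : ℝ) * τ := by positivity
      have hk1T : ((k + 1 : ℕ) : ℝ) * τ ≤ T := hstepT (k + 1) hkN
      have hkk1 : (k : ℝ) * τ ≤ ((k + 1 : ℕ) : ℝ) * τ := by
        push_cast; nlinarith [hτ.le]
      calc E (((k + 1 : ℕ) : ℝ) * τ) (pts (k + 1))
          ≤ E (((k + 1 : ℕ) : ℝ) * τ) (pts k) := by
            simpa using hmin (k + 1) (Nat.le_add_left 1 k) hkN
        _ ≤ E ((k : ℝ) * τ) (pts k) * Real.exp (lam * (((k + 1 : ℕ) : ℝ) * τ - (k : ℝ) * τ)) :=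
            keyF (pts k) _ _ hknn hkk1 hk1T
        _ ≤ E 0 x₀ * Real.exp (lam * ((k : ℝ) * τ)) *
              Real.exp (lam * (((k + 1 : ℕ) : ℝ) * τ - (k : ℝ) * τ)) :=
            mul_le_mul_of_nonneg_right ihk (Real.exp_nonneg _)
        _ = E 0 x₀ * Real.exp (lam * (((k + 1 : ℕ) : ℝ) * τ)) := by
            rw [mul_assoc, ← Real.exp_add]; ring_nf
  intro n h1 h2
  have hmain := main n h2
  refine ⟨hmain, ?_⟩
  have hnnn : (0:ℝ) ≤ (n : ℝ) * τ := by positivity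
  have hnT : (n : ℝ) * τ ≤ T := hstepT n h2
  have hback : E 0 (pts n) ≤ E ((n : ℝ) * τ) (pts n) * Real.exp (lam * ((n : ℝ) * τ)) := by
    simpa using keyB (pts n) 0 ((n : ℝ) * τ) le_rfl hnnn hnT
  calc E 0 (pts n) ≤ E ((n : ℝ) * τ) (pts n) * Real.exp (lam * ((n : ℝ) * τ)) := hback
    _ ≤ E 0 x₀ * Real.exp (lam * ((n : ℝ) * τ)) * Real.exp (lam * ((n : ℝ) * τ)) :=
        mul_le_mul_of_nonneg_right hmain (Real.exp_nonneg _)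
    _ = E 0 x₀ * Real.exp (2 * lam * ((n : ℝ) * τ)) := by
        rw [mul_assoc, ← Real.exp_add]; ring_nf
end

section
/- Let x^{ε,τ} be a discretized solution with initial datum x₀. Then for all 0 ≤ s ≤ t ≤ T one has Diss_Ψ(x^{ε,τ};[s,t]) < ∞, the function r ↦ ∂_t E(r, x^{ε,τ}(r)) is integrable on (0,T), and E(t, x^{ε,τ}(t)) − E(s, x^{ε,τ}(s)) ≤ ∫_s^t ∂_t E(r, x^{ε,τ}(r)) dr − Diss_Ψ(x^{ε,τ};[s,t]). -/
open Filter MeasureTheory Set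
open scoped Topology NNReal

/-!
On each cell `[(i−1)τ, iτ)` the interpolant is constant, so there the energy balance is exact
by the fundamental theorem of calculus in time. At a grid point `iτ` the interpolant jumps from
`x_{i−1}` to `x_i`, and testing the minimality of `x_i` against the competitor `x_{i−1}` shows
that the energy drops by at least `Ψ(x_i − x_{i−1})`. Summing over cells bounds the energy
increment by the integral of `∂_t E` minus the discrete dissipation
`∑ Ψ(x_{j+1} − x_j)`, and the latter dominates every partition sum of `Diss_Ψ` because `Ψ`,
being convex and positively homogeneous, is subadditive.
-/

theorem Fin.sum_succ_sub_castSucc {M : Type*} [AddCommGroup M] :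
    ∀ {n : ℕ} (G : Fin (n + 1) → M),
      ∑ i : Fin n, (G i.succ - G i.castSucc) = G (Fin.last n) - G 0
  | 0, _ => by simp
  | n + 1, G => by
    rw [Fin.sum_univ_castSucc, Fin.succ_last]
    simp only [Fin.succ_castSucc]
    rw [Fin.sum_succ_sub_castSucc (fun j => G j.castSucc)]
    simp only [Fin.castSucc_zero, ← Fin.succ_last]
    abel

section Dissipation

variable {X : Type*} [NormedAddCommGroup X] {Ψ : X → ℝ}

theorem dissSums_le_sub {u : ℝ → X} {G : ℝ → ℝ}
    (hG : ∀ a b, a ≤ b → Ψ (u b - u a) ≤ G b - G a) {s t S : ℝ}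
    (hS : S ∈ dissSums Ψ u s t) : S ≤ G t - G s := by
  obtain ⟨n, σ, hσ, rfl, rfl, rfl⟩ := hS
  calc ∑ i : Fin n, Ψ (u (σ i.succ) - u (σ i.castSucc))
      ≤ ∑ i : Fin n, (G (σ i.succ) - G (σ i.castSucc)) :=
        Finset.sum_le_sum fun i _ => hG _ _ (hσ Fin.castSucc_lt_succ).le
    _ = G (σ (Fin.last n)) - G (σ 0) := Fin.sum_succ_sub_castSucc (G ∘ σ)

theorem dissTV_le_sub {u : ℝ → X} {G : ℝ → ℝ}
    (hG : ∀ a b, a ≤ b → Ψ (u b - u a) ≤ G b - G a) {s t : ℝ} (hst : G s ≤ G t) :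
    dissTV Ψ u s t ≤ G t - G s :=
  Real.sSup_le (fun _ hS => dissSums_le_sub hG hS) (sub_nonneg.2 hst)

end Dissipation

theorem ConvexOn.map_add_le_of_homogeneous {X : Type*} [AddCommGroup X] [Module ℝ X]
    {Ψ : X → ℝ} (hconv : ConvexOn ℝ univ Ψ) (hhom : ∀ c : ℝ, 0 ≤ c → ∀ v, Ψ (c • v) = c * Ψ v)
    (a b : X) : Ψ (a + b) ≤ Ψ a + Ψ b := by
  have hmid := hconv.2 (mem_univ a) (mem_univ b) (by norm_num : (0:ℝ) ≤ 1/2)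
    (by norm_num : (0:ℝ) ≤ 1/2) (by norm_num)
  have hdouble : Ψ (a + b) = 2 * Ψ ((1/2 : ℝ) • a + (1/2 : ℝ) • b) := by
    rw [← hhom 2 zero_le_two]
    congr 1
    module
  rw [smul_eq_mul, smul_eq_mul] at hmid
  linarith

section DiscreteDissipation

variable {X : Type*} [AddCommGroup X] (Ψ : X → ℝ) (pts : ℕ → X)

noncomputable def discDiss (n : ℕ) : ℝ :=
  ∑ j ∈ Finset.range n, Ψ (pts (j + 1) - pts j)

variable {Ψ}

theorem discDiss_mono (hΨ : ∀ v, 0 ≤ Ψ v) : Monotone (discDiss Ψ pts) := fun _ _ hpq =>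
  Finset.sum_le_sum_of_subset_of_nonneg (Finset.range_subset_range.2 hpq) fun _ _ _ => hΨ _

theorem map_sub_le_discDiss_sub (hΨ0 : Ψ 0 = 0) (hadd : ∀ a b, Ψ (a + b) ≤ Ψ a + Ψ b)
    {p q : ℕ} (hpq : p ≤ q) :
    Ψ (pts q - pts p) ≤ discDiss Ψ pts q - discDiss Ψ pts p := by
  rw [discDiss, discDiss, ← Finset.sum_Ico_eq_sub _ hpq, ← Finset.sum_Ico_sub pts hpq]
  exact Finset.le_sum_of_subadditive Ψ hΨ0.le hadd _ _

end DiscreteDissipation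

section StepIndex

variable {τ : ℝ} {N : ℕ}

noncomputable def stepIndex (τ : ℝ) (N : ℕ) (r : ℝ) : ℕ :=
  min N ⌊r / τ⌋₊

theorem discInterp_eq_pts_stepIndex {X : Type*} (pts : ℕ → X) (r : ℝ) :
    discInterp pts τ N r = pts (stepIndex τ N r) :=
  rfl

theorem stepIndex_le (r : ℝ) : stepIndex τ N r ≤ N :=
  min_le_left _ _

theorem stepIndex_mono (hτ : 0 ≤ τ) : Monotone (stepIndex τ N) := fun _ _ h =>
  min_le_min le_rfl (Nat.floor_mono (div_le_div_of_nonneg_right h hτ))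

theorem stepIndex_natCast_mul (hτ : τ ≠ 0) {n : ℕ} (hn : n ≤ N) :
    stepIndex τ N (n * τ) = n := by
  rw [stepIndex, mul_div_cancel_right₀ _ hτ, Nat.floor_natCast, min_eq_right hn]

theorem stepIndex_lt (hτ : 0 < τ) {r : ℝ} (hr : 0 ≤ r) {n : ℕ} (h : r < n * τ) :
    stepIndex τ N r < n := by
  refine (min_le_right _ _).trans_lt ?_
  rwa [Nat.floor_lt (div_nonneg hr hτ.le), div_lt_iff₀ hτ]

theorem natCast_mul_le_of_le_stepIndex (hτ : 0 < τ) {r : ℝ} (hr : 0 ≤ r) {n : ℕ}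
    (h : n ≤ stepIndex τ N r) : n * τ ≤ r := by
  have hn : n ≤ ⌊r / τ⌋₊ := h.trans (min_le_right _ _)
  rwa [Nat.le_floor_iff (div_nonneg hr hτ.le), le_div_iff₀ hτ] at hn

theorem lt_stepIndex_add_one_mul (hτ : 0 < τ) {r : ℝ} (h : stepIndex τ N r < N) :
    r < ↑(stepIndex τ N r + 1) * τ := by
  have hfloor : stepIndex τ N r = ⌊r / τ⌋₊ := by simp only [stepIndex] at h ⊢; omega
  rw [hfloor, ← div_lt_iff₀ hτ]
  exact_mod_cast Nat.lt_floor_add_one (r / τ)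

theorem stepIndex_induction (hτ : 0 < τ) {T : ℝ} (P : ℝ → ℝ → Prop)
    (trans : ∀ a b c, 0 ≤ a → a ≤ b → b ≤ c → c ≤ T → P a b → P b c → P a c)
    (const : ∀ a b, 0 ≤ a → a ≤ b → b ≤ T →
      (∀ r ∈ Icc a b, stepIndex τ N r = stepIndex τ N a) → P a b)
    (jump : ∀ a (m : ℕ), 0 ≤ a → a < ↑(m + 1) * τ → ↑(m + 1) * τ ≤ T →
      (∀ r ∈ Ico a (↑(m + 1) * τ), stepIndex τ N r = m) →
      stepIndex τ N (↑(m + 1) * τ) = m + 1 → P a (↑(m + 1) * τ))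
    {s t : ℝ} (hs : 0 ≤ s) (hst : s ≤ t) (ht : t ≤ T) : P s t := by
  obtain ⟨d, hd⟩ := Nat.exists_eq_add_of_le (stepIndex_mono (N := N) hτ.le hst)
  induction d generalizing s with
  | zero =>
    refine const s t hs hst ht fun r hr => ?_
    exact le_antisymm ((stepIndex_mono hτ.le hr.2).trans hd.le) (stepIndex_mono hτ.le hr.1)
  | succ d ih =>
    set m := stepIndex τ N s
    have hmN : m + 1 ≤ N := by have := stepIndex_le (τ := τ) (N := N) t; omega
    have hb0 : 0 ≤ (↑(m + 1) : ℝ) * τ := by positivity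
    have hbt : ↑(m + 1) * τ ≤ t := natCast_mul_le_of_le_stepIndex (N := N) hτ (hs.trans hst) (by omega)
    have hsb : s < ↑(m + 1) * τ := lt_stepIndex_add_one_mul (N := N) hτ (by omega)
    have hkb : stepIndex τ N (↑(m + 1) * τ) = m + 1 := stepIndex_natCast_mul hτ.ne' hmN
    refine trans s _ t hs hsb.le hbt ht (jump s m hs hsb (hbt.trans ht) (fun r hr => ?_) hkb)
      (ih hb0 hbt (by omega))
    exact le_antisymm (Nat.lt_succ_iff.1 (stepIndex_lt hτ (hs.trans hr.1) hr.2))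
      (stepIndex_mono hτ.le hr.1)

end StepIndex

theorem integral_eq_sub_of_hasDerivWithinAt_Icc {f f' : ℝ → ℝ} {c d : ℝ}
    (hf : ∀ t ∈ Icc c d, HasDerivWithinAt f (f' t) (Icc c d) t)
    (hf' : ContinuousOn f' (Icc c d)) {a b : ℝ} (ha : c ≤ a) (hab : a ≤ b) (hb : b ≤ d) :
    ∫ r in a..b, f' r = f b - f a := by
  have hsub : Icc a b ⊆ Icc c d := Icc_subset_Icc ha hb
  refine intervalIntegral.integral_eq_sub_of_hasDerivAt_of_le hab
    (fun r hr => (hf r (hsub hr)).continuousWithinAt.mono hsub) (fun r hr => ?_)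
    ((hf'.mono hsub).intervalIntegrable_of_Icc hab)
  exact (hf r (hsub (Ioo_subset_Icc_self hr))).hasDerivAt
    (Icc_mem_nhds (ha.trans_lt hr.1) (hr.2.trans_le hb))

theorem IsDiscreteSol.energy_add_le {X : Type*} [NormedAddCommGroup X] {E : ℝ → X → ℝ}
    {Ψ : X → ℝ} {x₀ : X} {ε τ : ℝ} {N : ℕ} {pts : ℕ → X}
    (hsol : IsDiscreteSol E Ψ x₀ ε τ N pts) (hε : 0 ≤ ε) (hΨ0 : Ψ 0 = 0) {m : ℕ}
    (hm : m + 1 ≤ N) :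
    E (↑(m + 1) * τ) (pts (m + 1)) + Ψ (pts (m + 1) - pts m) ≤ E (↑(m + 1) * τ) (pts m) := by
  have hmin := (hsol.2 (m + 1) (Nat.le_add_left 1 m) hm).2 (pts m) (by simpa using hε)
  simpa [hΨ0] using hmin

section Energy

variable {X : Type*} {E Et : ℝ → X → ℝ} {T : ℝ}
    (hEt : ∀ x, ∀ t ∈ Icc 0 T, HasDerivWithinAt (fun s => E s x) (Et t x) (Icc 0 T) t)
    (hEtc : ∀ x, ContinuousOn (fun r => Et r x) (Icc 0 T))
include hEt hEtc

theorem intervalIntegrable_and_integral_eq_of_eqOn_Ico {u : ℝ → X} {x : X} {a b : ℝ}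
    (ha : 0 ≤ a) (hab : a ≤ b) (hb : b ≤ T) (hu : EqOn u (fun _ => x) (Ico a b)) :
    IntervalIntegrable (fun r => Et r (u r)) volume a b ∧
      ∫ r in a..b, Et r (u r) = E b x - E a x := by
  have hu' : EqOn (fun r => Et r x) (fun r => Et r (u r)) (uIoo a b) := fun r hr => by
    rw [uIoo_of_le hab] at hr
    simp only [hu (Ioo_subset_Ico_self hr)]
  refine ⟨(((hEtc x).mono (Icc_subset_Icc ha hb)).intervalIntegrable_of_Icc hab).congr_uIoo hu',
    ?_⟩
  rw [← intervalIntegral.integral_congr_uIoo hu']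
  exact integral_eq_sub_of_hasDerivWithinAt_Icc (hEt x) (hEtc x) ha hab hb

variable {τ : ℝ} {N : ℕ} {pts : ℕ → X} (hτ : 0 < τ)
include hτ

theorem intervalIntegrable_discInterp {s t : ℝ} (hs : 0 ≤ s) (hst : s ≤ t) (ht : t ≤ T) :
    IntervalIntegrable (fun r => Et r (discInterp pts τ N r)) volume s t := by
  refine stepIndex_induction (N := N) hτ (fun a b => IntervalIntegrable _ volume a b)
    (fun _ _ _ _ _ _ _ hab hbc => hab.trans hbc) (fun a b ha hab hb hk => ?_)
    (fun a m ha hab hb hk _ => ?_) hs hst ht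
  · exact (intervalIntegrable_and_integral_eq_of_eqOn_Ico hEt hEtc ha hab hb
      fun r hr => congrArg pts (hk r (Ico_subset_Icc_self hr))).1
  · exact (intervalIntegrable_and_integral_eq_of_eqOn_Ico hEt hEtc ha hab.le hb
      fun r hr => congrArg pts (hk r hr)).1

theorem IsDiscreteSol.energy_sub_le [NormedAddCommGroup X] {Ψ : X → ℝ} {x₀ : X} {ε : ℝ}
    (hsol : IsDiscreteSol E Ψ x₀ ε τ N pts) (hε : 0 ≤ ε) (hΨ0 : Ψ 0 = 0)
    {s t : ℝ} (hs : 0 ≤ s) (hst : s ≤ t) (ht : t ≤ T) :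
    E t (discInterp pts τ N t) - E s (discInterp pts τ N s) ≤
      (∫ r in s..t, Et r (discInterp pts τ N r)) -
        (discDiss Ψ pts (stepIndex τ N t) - discDiss Ψ pts (stepIndex τ N s)) := by
  refine stepIndex_induction (N := N) hτ
    (fun a b => E b (discInterp pts τ N b) - E a (discInterp pts τ N a) ≤
      (∫ r in a..b, Et r (discInterp pts τ N r)) -
        (discDiss Ψ pts (stepIndex τ N b) - discDiss Ψ pts (stepIndex τ N a)))
    (fun a b c ha hab hbc hc hP₁ hP₂ => ?_) (fun a b ha hab hb hk => ?_)
    (fun a m ha hab hb hk hkb => ?_) hs hst ht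
  · rw [← intervalIntegral.integral_add_adjacent_intervals
      (intervalIntegrable_discInterp hEt hEtc hτ ha hab (hbc.trans hc))
      (intervalIntegrable_discInterp hEt hEtc hτ (ha.trans hab) hbc hc)]
    linarith
  · have hcell := (intervalIntegrable_and_integral_eq_of_eqOn_Ico (u := discInterp pts τ N)
      hEt hEtc ha hab hb fun r hr => congrArg pts (hk r (Ico_subset_Icc_self hr))).2
    rw [hcell, discInterp_eq_pts_stepIndex, discInterp_eq_pts_stepIndex, hk b (right_mem_Icc.2 hab),
      sub_self, sub_zero]
  · have hka : stepIndex τ N a = m := hk a (left_mem_Ico.2 hab)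
    have hcell := (intervalIntegrable_and_integral_eq_of_eqOn_Ico (u := discInterp pts τ N)
      hEt hEtc ha hab.le hb fun r hr => congrArg pts (hk r hr)).2
    have hstep := hsol.energy_add_le hε hΨ0 (hkb ▸ stepIndex_le _)
    rw [hcell, discInterp_eq_pts_stepIndex, discInterp_eq_pts_stepIndex, hka, hkb, discDiss,
      discDiss, Finset.sum_range_succ]
    linarith

end Energy

theorem stmt_3_general
    {X : Type*} [NormedAddCommGroup X] [NormedSpace ℝ X]
    (T : ℝ)
    (E Et : ℝ → X → ℝ)
    (hEt : ∀ x : X, ∀ t ∈ Set.Icc (0:ℝ) T,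
      HasDerivWithinAt (fun s => E s x) (Et t x) (Set.Icc 0 T) t)
    (hEtc : ContinuousOn (fun p : ℝ × X => Et p.1 p.2) (Set.Icc 0 T ×ˢ Set.univ))
    (Ψ : X → ℝ) (hΨnn : ∀ v, 0 ≤ Ψ v) (hΨconv : ConvexOn ℝ Set.univ Ψ)
    (hΨhom : ∀ c : ℝ, 0 ≤ c → ∀ v : X, Ψ (c • v) = c * Ψ v)
    (x₀ : X) (ε τ : ℝ) (hε : 0 < ε) (hτ : 0 < τ)
    (N : ℕ)
    (pts : ℕ → X) (hsol : IsDiscreteSol E Ψ x₀ ε τ N pts) :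
    ∀ s t : ℝ, 0 ≤ s → s ≤ t → t ≤ T →
      BddAbove (dissSums Ψ (discInterp pts τ N) s t) ∧
      MeasureTheory.IntegrableOn (fun r => Et r (discInterp pts τ N r)) (Set.Ioo 0 T) ∧
      E t (discInterp pts τ N t) - E s (discInterp pts τ N s) ≤
        (∫ r in s..t, Et r (discInterp pts τ N r)) - dissTV Ψ (discInterp pts τ N) s t := by
  intro s t hs hst ht
  have hΨ0 : Ψ 0 = 0 := by simpa using hΨhom 0 le_rfl 0
  have hEtc' : ∀ x, ContinuousOn (fun r => Et r x) (Icc 0 T) := fun x =>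
    hEtc.comp (Continuous.prodMk_left x).continuousOn fun _ hr => ⟨hr, mem_univ x⟩
  have hincr : ∀ a b, a ≤ b → Ψ (discInterp pts τ N b - discInterp pts τ N a) ≤
      discDiss Ψ pts (stepIndex τ N b) - discDiss Ψ pts (stepIndex τ N a) := fun _ _ hab =>
    map_sub_le_discDiss_sub pts hΨ0 (hΨconv.map_add_le_of_homogeneous hΨhom)
      (stepIndex_mono hτ.le hab)
  refine ⟨⟨_, fun _ hS => dissSums_le_sub hincr hS⟩, ?_, ?_⟩
  · have hT : 0 ≤ T := hs.trans (hst.trans ht)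
    exact (intervalIntegrable_iff_integrableOn_Ioo_of_le hT).1
      (intervalIntegrable_discInterp hEt hEtc' hτ le_rfl hT le_rfl)
  · linarith [hsol.energy_sub_le hEt hEtc' hτ hε.le hΨ0 hs hst ht,
      dissTV_le_sub hincr (discDiss_mono pts hΨnn (stepIndex_mono hτ.le hst))]

theorem stmt_3
    {X : Type*} [NormedAddCommGroup X] [NormedSpace ℝ X] [FiniteDimensional ℝ X]
    [Nontrivial X]
    (T : ℝ) (hT : 0 < T)
    (E Et : ℝ → X → ℝ) (DE : ℝ → X → X →L[ℝ] ℝ)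
    (hEnn : ∀ t ∈ Set.Icc (0:ℝ) T, ∀ x : X, 0 ≤ E t x)
    (hEt : ∀ x : X, ∀ t ∈ Set.Icc (0:ℝ) T,
      HasDerivWithinAt (fun s => E s x) (Et t x) (Set.Icc 0 T) t)
    (hDE : ∀ t ∈ Set.Icc (0:ℝ) T, ∀ x : X, HasFDerivAt (fun y => E t y) (DE t x) x)
    (hEtc : ContinuousOn (fun p : ℝ × X => Et p.1 p.2) (Set.Icc 0 T ×ˢ Set.univ))
    (hDEc : ContinuousOn (fun p : ℝ × X => DE p.1 p.2) (Set.Icc 0 T ×ˢ Set.univ))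
    (lam : ℝ) (hlam : 0 ≤ lam)
    (hEbound : ∀ s ∈ Set.Icc (0:ℝ) T, ∀ x : X, |Et s x| ≤ lam * E s x)
    (Ψ : X → ℝ) (hΨnn : ∀ v, 0 ≤ Ψ v) (hΨconv : ConvexOn ℝ Set.univ Ψ)
    (hΨhom : ∀ c : ℝ, 0 ≤ c → ∀ v : X, Ψ (c • v) = c * Ψ v)
    (hΨpos : ∀ v : X, v ≠ 0 → 0 < Ψ v)
    (x₀ : X) (ε τ : ℝ) (hε : 0 < ε) (hτ : 0 < τ)
    (N : ℕ) (hNT : (N : ℝ) * τ ≤ T ∧ T < ((N : ℝ) + 1) * τ)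
    (pts : ℕ → X) (hsol : IsDiscreteSol E Ψ x₀ ε τ N pts) :
    ∀ s t : ℝ, 0 ≤ s → s ≤ t → t ≤ T →
      BddAbove (dissSums Ψ (discInterp pts τ N) s t) ∧
      MeasureTheory.IntegrableOn (fun r => Et r (discInterp pts τ N r)) (Set.Ioo 0 T) ∧
      E t (discInterp pts τ N t) - E s (discInterp pts τ N s) ≤
        (∫ r in s..t, Et r (discInterp pts τ N r)) - dissTV Ψ (discInterp pts τ N) s t :=
  stmt_3_general T E Et hEt hEtc Ψ hΨnn hΨconv hΨhom x₀ ε τ hε hτ N pts hsol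
end

section
/- Every discretized solution x^{ε,τ} with initial datum x₀ satisfies the uniform dissipation bound Diss_Ψ(x^{ε,τ};[0,T]) ≤ E(0,x₀)·e^{λT}, which is independent of ε and τ. -/
/-!
Comparing the minimizer `x_i` with the admissible competitor `x_{i-1}` gives
`E(t_i, x_i) + Ψ(x_i - x_{i-1}) ≤ E(t_i, x_{i-1})`, and Grönwall's inequality turns
`|∂_t E| ≤ λ E` into `E(t_i, x) ≤ e^{λτ} E(t_{i-1}, x)`. Iterating, the total step cost
`∑ Ψ(x_i - x_{i-1})` is at most `E(0, x₀) e^{λ N τ}`. A convex positively homogeneous `Ψ` is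
subadditive, so every partition sum of the piecewise constant interpolant is dominated by
the total step cost.
-/

open Filter MeasureTheory Set
open scoped Topology NNReal

open Finset Real

section PositivelyHomogeneous

variable {V : Type*} [AddCommGroup V] [Module ℝ V] {Ψ : V → ℝ}

lemma map_zero_of_pos_homogeneous (hhom : ∀ c : ℝ, 0 ≤ c → ∀ v : V, Ψ (c • v) = c * Ψ v) :
    Ψ 0 = 0 := by
  simpa using hhom 0 le_rfl 0

lemma ConvexOn.map_add_le_of_pos_homogeneous (hconv : ConvexOn ℝ univ Ψ)
    (hhom : ∀ c : ℝ, 0 ≤ c → ∀ v : V, Ψ (c • v) = c * Ψ v) (a b : V) :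
    Ψ (a + b) ≤ Ψ a + Ψ b := by
  have hmid := hconv.2 (mem_univ a) (mem_univ b) (by norm_num : (0 : ℝ) ≤ 1 / 2)
    (by norm_num : (0 : ℝ) ≤ 1 / 2) (by norm_num)
  have hscale : a + b = (2 : ℝ) • ((1 / 2 : ℝ) • a + (1 / 2 : ℝ) • b) := by module
  rw [hscale, hhom 2 (by norm_num)]
  simp only [smul_eq_mul] at hmid
  linarith

end PositivelyHomogeneous

section Subadditive

variable {V : Type*} [AddCommGroup V] {Ψ : V → ℝ}

lemma map_sub_le_sum_Ico (h0 : Ψ 0 = 0) (hadd : ∀ a b, Ψ (a + b) ≤ Ψ a + Ψ b) (x : ℕ → V)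
    {a b : ℕ} (hab : a ≤ b) :
    Ψ (x b - x a) ≤ ∑ j ∈ Ico a b, Ψ (x (j + 1) - x j) := by
  rw [← sum_Ico_sub x hab]
  exact le_sum_of_subadditive Ψ h0.le hadd _ _

lemma sum_fin_map_sub_le_sum_Ico (h0 : Ψ 0 = 0) (hadd : ∀ a b, Ψ (a + b) ≤ Ψ a + Ψ b)
    (x : ℕ → V) {n : ℕ} (m : Fin (n + 1) → ℕ) (hm : Monotone m) :
    ∑ i : Fin n, Ψ (x (m i.succ) - x (m i.castSucc)) ≤
      ∑ j ∈ Ico (m 0) (m (Fin.last n)), Ψ (x (j + 1) - x j) := by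
  induction n with
  | zero => simp
  | succ n ih =>
    have hinit := ih (m ∘ Fin.castSucc) (hm.comp Fin.strictMono_castSucc.monotone)
    have hlast := map_sub_le_sum_Ico h0 hadd x
      (hm (Fin.castSucc_le_succ (Fin.last n)) : m (Fin.last n).castSucc ≤ m (Fin.last n).succ)
    simp only [Function.comp_apply, Fin.castSucc_zero, Fin.succ_last] at hinit hlast
    rw [Fin.sum_univ_castSucc, ← Fin.succ_last, ← sum_Ico_consecutive _
      (hm (Fin.zero_le _)) (hm (Fin.castSucc_le_succ (Fin.last n)))]
    simp only [Fin.succ_castSucc]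
    exact add_le_add hinit hlast

end Subadditive

section Dissipation

variable {X : Type*} [NormedAddCommGroup X] {Ψ : X → ℝ}

lemma le_sum_Ico_of_mem_dissSums_comp (h0 : Ψ 0 = 0) (hadd : ∀ a b, Ψ (a + b) ≤ Ψ a + Ψ b)
    (x : ℕ → X) {k : ℝ → ℕ} (hk : Monotone k) {a b S : ℝ} (hS : S ∈ dissSums Ψ (x ∘ k) a b) :
    S ≤ ∑ j ∈ Ico (k a) (k b), Ψ (x (j + 1) - x j) := by
  obtain ⟨n, σ, hσ, rfl, rfl, rfl⟩ := hS
  exact sum_fin_map_sub_le_sum_Ico h0 hadd x (k ∘ σ) (hk.comp hσ.monotone)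

lemma le_sum_range_of_mem_dissSums_discInterp (h0 : Ψ 0 = 0)
    (hadd : ∀ a b, Ψ (a + b) ≤ Ψ a + Ψ b) {pts : ℕ → X} {τ T S : ℝ} {N : ℕ} (hτ : 0 < τ)
    (hNT : (N : ℝ) * τ ≤ T) (hS : S ∈ dissSums Ψ (discInterp pts τ N) 0 T) :
    S ≤ ∑ j ∈ range N, Ψ (pts (j + 1) - pts j) := by
  have hk : Monotone fun t : ℝ => min N ⌊t / τ⌋₊ := fun s t hst =>
    min_le_min le_rfl (Nat.floor_mono (div_le_div_of_nonneg_right hst hτ.le))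
  have hkT : min N ⌊T / τ⌋₊ = N := min_eq_left (Nat.le_floor ((le_div_iff₀ hτ).2 hNT))
  have hk0 : min N ⌊(0 : ℝ) / τ⌋₊ = 0 := by simp
  have := le_sum_Ico_of_mem_dissSums_comp h0 hadd pts hk hS
  rwa [hk0, hkT, ← range_eq_Ico] at this

end Dissipation

lemma le_mul_exp_of_hasDerivWithinAt_le {f f' : ℝ → ℝ} {K a b s t : ℝ}
    (hf : ∀ x ∈ Icc a b, HasDerivWithinAt f (f' x) (Icc a b) x)
    (bound : ∀ x ∈ Icc a b, f' x ≤ K * f x) (hs : a ≤ s) (hst : s ≤ t) (ht : t ≤ b) :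
    f t ≤ f s * exp (K * (t - s)) := by
  have hsub : Icc s t ⊆ Icc a b := Icc_subset_Icc hs ht
  have hcont : ContinuousOn f (Icc s t) :=
    fun x hx => (hf x (hsub hx)).continuousWithinAt.mono hsub
  have hright : ∀ x ∈ Ico s t, HasDerivWithinAt f (f' x) (Ici x) x := fun x hx =>
    (hf x (hsub (Ico_subset_Icc_self hx))).mono_of_mem_nhdsWithin
      (Icc_mem_nhdsGE_of_mem ⟨hs.trans hx.1, hx.2.trans_le ht⟩)
  have := le_gronwallBound_of_liminf_deriv_right_le (ε := 0) hcont
    (fun x hx _ hr => (hright x hx).liminf_right_slope_le hr) le_rfl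
    (fun x hx => by rw [add_zero]; exact bound x (hsub (Ico_subset_Icc_self hx)))
    t ⟨hst, le_rfl⟩
  rwa [gronwallBound_ε0] at this

namespace IsDiscreteSol

variable {X : Type*} [NormedAddCommGroup X] {E : ℝ → X → ℝ} {Ψ : X → ℝ}
  {x₀ : X} {ε τ : ℝ} {N : ℕ} {pts : ℕ → X}

lemma energy_add_step_le (hsol : IsDiscreteSol E Ψ x₀ ε τ N pts) (hε : 0 ≤ ε) (h0 : Ψ 0 = 0)
    {i : ℕ} (hi : i < N) :
    E ((i + 1 : ℕ) * τ) (pts (i + 1)) + Ψ (pts (i + 1) - pts i) ≤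
      E ((i + 1 : ℕ) * τ) (pts i) := by
  simpa [h0, hε] using (hsol.2 (i + 1) (Nat.le_add_left 1 i) hi).2 (pts i)

lemma sum_step_add_energy_le (hsol : IsDiscreteSol E Ψ x₀ ε τ N pts) (hε : 0 ≤ ε)
    (h0 : Ψ 0 = 0) (hΨnn : ∀ v, 0 ≤ Ψ v) {q : ℝ} (hq : 1 ≤ q)
    (hgrow : ∀ i < N, ∀ x, E ((i + 1 : ℕ) * τ) x ≤ E (i * τ) x * q) {n : ℕ} (hn : n ≤ N) :
    ∑ j ∈ range n, Ψ (pts (j + 1) - pts j) + E (n * τ) (pts n) ≤ E 0 x₀ * q ^ n := by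
  induction n with
  | zero => simp [hsol.1]
  | succ n ih =>
    have hstep := hsol.energy_add_step_le hε h0 hn
    have hsum : 0 ≤ ∑ j ∈ range n, Ψ (pts (j + 1) - pts j) := sum_nonneg fun j _ => hΨnn _
    calc ∑ j ∈ range (n + 1), Ψ (pts (j + 1) - pts j) + E ((n + 1 : ℕ) * τ) (pts (n + 1))
        ≤ ∑ j ∈ range n, Ψ (pts (j + 1) - pts j) + E (n * τ) (pts n) * q := by
          rw [sum_range_succ]; linarith [hgrow n hn (pts n)]
      _ ≤ (∑ j ∈ range n, Ψ (pts (j + 1) - pts j) + E (n * τ) (pts n)) * q := by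
          rw [add_mul]; linarith [le_mul_of_one_le_right hsum hq]
      _ ≤ E 0 x₀ * q ^ (n + 1) := by
          rw [pow_succ, ← mul_assoc]
          exact mul_le_mul_of_nonneg_right (ih (by omega)) (by linarith)

end IsDiscreteSol

theorem stmt_4_general
    {X : Type*} [NormedAddCommGroup X] [NormedSpace ℝ X]
    (T : ℝ)
    (E Et : ℝ → X → ℝ)
    (hEnn : ∀ t ∈ Set.Icc (0:ℝ) T, ∀ x : X, 0 ≤ E t x)
    (hEt : ∀ x : X, ∀ t ∈ Set.Icc (0:ℝ) T,
      HasDerivWithinAt (fun s => E s x) (Et t x) (Set.Icc 0 T) t)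
    (lam : ℝ) (hlam : 0 ≤ lam)
    (hEbound : ∀ s ∈ Set.Icc (0:ℝ) T, ∀ x : X, |Et s x| ≤ lam * E s x)
    (Ψ : X → ℝ) (hΨnn : ∀ v, 0 ≤ Ψ v) (hΨconv : ConvexOn ℝ Set.univ Ψ)
    (hΨhom : ∀ c : ℝ, 0 ≤ c → ∀ v : X, Ψ (c • v) = c * Ψ v)
    (x₀ : X) (ε τ : ℝ) (hε : 0 < ε) (hτ : 0 < τ)
    (N : ℕ) (hNT : (N : ℝ) * τ ≤ T ∧ T < ((N : ℝ) + 1) * τ)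
    (pts : ℕ → X) (hsol : IsDiscreteSol E Ψ x₀ ε τ N pts) :
    ∀ S ∈ dissSums Ψ (discInterp pts τ N) 0 T, S ≤ E 0 x₀ * Real.exp (lam * T) := by
  intro S hS
  have hΨ0 : Ψ 0 = 0 := map_zero_of_pos_homogeneous hΨhom
  have hNτ : 0 ≤ (N : ℝ) * τ := by positivity
  have hgrow : ∀ i < N, ∀ x, E ((i + 1 : ℕ) * τ) x ≤ E (i * τ) x * exp (lam * τ) := by
    intro i hi x
    have hiN : ((i + 1 : ℕ) : ℝ) * τ ≤ N * τ := by gcongr; exact_mod_cast hi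
    have := le_mul_exp_of_hasDerivWithinAt_le (s := i * τ) (hEt x)
      (fun s hs => (le_abs_self _).trans (hEbound s hs x)) (by positivity)
      (by gcongr; exact_mod_cast i.le_succ) (hiN.trans hNT.1)
    rwa [show ((i + 1 : ℕ) : ℝ) * τ - i * τ = τ by push_cast; ring] at this
  have henergy := hsol.sum_step_add_energy_le hε.le hΨ0 hΨnn (one_le_exp (by positivity))
    hgrow le_rfl
  have hEN : 0 ≤ E (N * τ) (pts N) := hEnn _ ⟨hNτ, hNT.1⟩ _
  calc S ≤ ∑ j ∈ range N, Ψ (pts (j + 1) - pts j) :=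
        le_sum_range_of_mem_dissSums_discInterp hΨ0
          (hΨconv.map_add_le_of_pos_homogeneous hΨhom) hτ hNT.1 hS
    _ ≤ E 0 x₀ * exp (lam * τ) ^ N := by linarith
    _ ≤ E 0 x₀ * exp (lam * T) := by
        rw [← exp_nat_mul, mul_left_comm]
        exact mul_le_mul_of_nonneg_left (exp_le_exp.2 (mul_le_mul_of_nonneg_left hNT.1 hlam))
          (hEnn 0 ⟨le_rfl, hNτ.trans hNT.1⟩ x₀)

theorem stmt_4
    {X : Type*} [NormedAddCommGroup X] [NormedSpace ℝ X] [FiniteDimensional ℝ X]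
    [Nontrivial X]
    (T : ℝ) (hT : 0 < T)
    (E Et : ℝ → X → ℝ) (DE : ℝ → X → X →L[ℝ] ℝ)
    (hEnn : ∀ t ∈ Set.Icc (0:ℝ) T, ∀ x : X, 0 ≤ E t x)
    (hEt : ∀ x : X, ∀ t ∈ Set.Icc (0:ℝ) T,
      HasDerivWithinAt (fun s => E s x) (Et t x) (Set.Icc 0 T) t)
    (hDE : ∀ t ∈ Set.Icc (0:ℝ) T, ∀ x : X, HasFDerivAt (fun y => E t y) (DE t x) x)
    (hEtc : ContinuousOn (fun p : ℝ × X => Et p.1 p.2) (Set.Icc 0 T ×ˢ Set.univ))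
    (hDEc : ContinuousOn (fun p : ℝ × X => DE p.1 p.2) (Set.Icc 0 T ×ˢ Set.univ))
    (lam : ℝ) (hlam : 0 ≤ lam)
    (hEbound : ∀ s ∈ Set.Icc (0:ℝ) T, ∀ x : X, |Et s x| ≤ lam * E s x)
    (Ψ : X → ℝ) (hΨnn : ∀ v, 0 ≤ Ψ v) (hΨconv : ConvexOn ℝ Set.univ Ψ)
    (hΨhom : ∀ c : ℝ, 0 ≤ c → ∀ v : X, Ψ (c • v) = c * Ψ v)
    (hΨpos : ∀ v : X, v ≠ 0 → 0 < Ψ v)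
    (x₀ : X) (ε τ : ℝ) (hε : 0 < ε) (hτ : 0 < τ)
    (N : ℕ) (hNT : (N : ℝ) * τ ≤ T ∧ T < ((N : ℝ) + 1) * τ)
    (pts : ℕ → X) (hsol : IsDiscreteSol E Ψ x₀ ε τ N pts) :
    ∀ S ∈ dissSums Ψ (discInterp pts τ N) 0 T, S ≤ E 0 x₀ * Real.exp (lam * T) :=
  stmt_4_general T E Et hEnn hEt lam hlam hEbound Ψ hΨnn hΨconv hΨhom x₀ ε τ hε hτ N hNT pts hsol
end

section
/- Fix ε > 0, a sequence τ_n → 0⁺, discretized solutions x^{ε,τ_n} with common initial datum x₀, and suppose x^{ε,τ_n}(t) → x^ε(t) as n → ∞ for every t ∈ [0,T]. If x^ε is right-continuous at t ∈ [0,T) (i.e. x^ε(t') → x^ε(t) as t' → t⁺), then the epsilon local stability holds at t: E(t, x^ε(t)) ≤ E(t,z) + Ψ(z − x^ε(t)) for all z ∈ ℝ^d with ‖z − x^ε(t)‖ ≤ ε. -/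
open Filter MeasureTheory Set
open scoped Topology NNReal

/-!
For fixed `x` the weighted energy `e^{-λs} E(s,x)` is nonincreasing in `s`
(Gronwall, from `|∂ₜE| ≤ λE`), and along a discrete solution it is also nonincreasing in the
step index, because staying put is an admissible competitor and `Ψ 0 = 0`. At the first node
`iτ` after `t`, the point `x^τ(t) + (z - x(t))` is admissible, so for `t' > t + τ`
`e^{-λt'} E(t', x^τ(t')) ≤ e^{-λt} (E(t, x^τ(t) + z - x(t)) + Ψ(z - x(t)))`.
Letting `τ → 0` and then `t' → t⁺`, right-continuity of `x` gives the local stability at `t`.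
-/

open Real

section Gronwall

variable {f f' : ℝ → ℝ} {a b c : ℝ}

theorem monotoneOn_exp_mul_mul (hf : ∀ s ∈ Icc a b, HasDerivWithinAt f (f' s) (Icc a b) s)
    (hf' : ∀ s ∈ Ioo a b, -(c * f s) ≤ f' s) :
    MonotoneOn (fun s => exp (c * s) * f s) (Icc a b) := by
  have hderiv : ∀ s ∈ Icc a b, HasDerivWithinAt (fun s => exp (c * s) * f s)
      (exp (c * s) * (c * f s + f' s)) (Icc a b) s := fun s hs => by
    have hexp : HasDerivWithinAt (fun s => exp (c * s)) (exp (c * s) * c) (Icc a b) s := by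
      simpa using ((hasDerivWithinAt_id s (Icc a b)).const_mul c).exp
    exact (hexp.mul (hf s hs)).congr_deriv (by ring)
  refine monotoneOn_of_hasDerivWithinAt_nonneg (convex_Icc a b)
    (fun s hs => (hderiv s hs).continuousWithinAt)
    (fun s hs => (hderiv s (interior_subset hs)).mono interior_subset) fun s hs => ?_
  rw [interior_Icc] at hs
  exact mul_nonneg (exp_pos _).le (by linarith [hf' s hs])

theorem antitoneOn_exp_neg_mul_mul (hf : ∀ s ∈ Icc a b, HasDerivWithinAt f (f' s) (Icc a b) s)
    (hf' : ∀ s ∈ Ioo a b, f' s ≤ c * f s) :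
    AntitoneOn (fun s => exp (-c * s) * f s) (Icc a b) := by
  have := (monotoneOn_exp_mul_mul (c := -c) (fun s hs => (hf s hs).neg)
    fun s hs => by simpa using hf' s hs).neg
  simpa using this

end Gronwall

section Energy

variable {X : Type*} {E Et : ℝ → X → ℝ} {T lam : ℝ}

theorem antitoneOn_exp_neg_mul_energy
    (hEt : ∀ x : X, ∀ t ∈ Icc (0:ℝ) T, HasDerivWithinAt (fun s => E s x) (Et t x) (Icc 0 T) t)
    (hEbound : ∀ s ∈ Icc (0:ℝ) T, ∀ x : X, |Et s x| ≤ lam * E s x) (x : X) :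
    AntitoneOn (fun s => exp (-lam * s) * E s x) (Icc 0 T) :=
  antitoneOn_exp_neg_mul_mul (hEt x) fun s hs =>
    (le_abs_self _).trans (hEbound s (Ioo_subset_Icc_self hs) x)

theorem monotoneOn_exp_mul_energy
    (hEt : ∀ x : X, ∀ t ∈ Icc (0:ℝ) T, HasDerivWithinAt (fun s => E s x) (Et t x) (Icc 0 T) t)
    (hEbound : ∀ s ∈ Icc (0:ℝ) T, ∀ x : X, |Et s x| ≤ lam * E s x) (x : X) :
    MonotoneOn (fun s => exp (lam * s) * E s x) (Icc 0 T) :=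
  monotoneOn_exp_mul_mul (hEt x) fun s hs =>
    neg_le_of_abs_le (hEbound s (Ioo_subset_Icc_self hs) x)

theorem energy_le_of_exp_neg_mul_energy_le [TopologicalSpace X]
    (hEt : ∀ x : X, ∀ t ∈ Icc (0:ℝ) T, HasDerivWithinAt (fun s => E s x) (Et t x) (Icc 0 T) t)
    (hEbound : ∀ s ∈ Icc (0:ℝ) T, ∀ x : X, |Et s x| ≤ lam * E s x) {t C : ℝ}
    (hcont : Continuous (E t)) (ht : t ∈ Ico 0 T) {u : ℝ → X} (hu : Tendsto u (𝓝[>] t) (𝓝 (u t)))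
    (hC : ∀ t' ∈ Ioo t T, exp (-lam * t') * E t' (u t') ≤ exp (-lam * t) * C) :
    E t (u t) ≤ C := by
  have hbound : ∀ t' ∈ Ioo t T,
      exp (lam * t) * E t (u t') ≤ exp (2 * lam * t') * (exp (-lam * t) * C) := fun t' ht' =>
    calc exp (lam * t) * E t (u t')
        ≤ exp (lam * t') * E t' (u t') := monotoneOn_exp_mul_energy hEt hEbound (u t')
          (Ico_subset_Icc_self ht) ⟨ht.1.trans ht'.1.le, ht'.2.le⟩ ht'.1.le
      _ = exp (2 * lam * t') * (exp (-lam * t') * E t' (u t')) := by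
          rw [← mul_assoc, ← exp_add]; ring_nf
      _ ≤ exp (2 * lam * t') * (exp (-lam * t) * C) :=
          mul_le_mul_of_nonneg_left (hC t' ht') (exp_pos _).le
  have hlim := le_of_tendsto_of_tendsto (((hcont.tendsto _).comp hu).const_mul (exp (lam * t)))
    (((by fun_prop : Continuous fun t' => exp (2 * lam * t') * (exp (-lam * t) * C)).tendsto
      t).mono_left nhdsWithin_le_nhds)
    (eventually_of_mem (Ioo_mem_nhdsGT ht.2) hbound)
  have hexp : exp (2 * lam * t) * (exp (-lam * t) * C) = exp (lam * t) * C := by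
    rw [← mul_assoc, ← exp_add]; ring_nf
  exact le_of_mul_le_mul_left (hexp ▸ hlim) (exp_pos _)

end Energy

section Floor

variable {K : Type*} [Field K] [LinearOrder K] [IsStrictOrderedRing K] [FloorSemiring K]
  {τ s s' : K}

theorem floor_div_mul_le (hτ : 0 < τ) (hs : 0 ≤ s) : (⌊s / τ⌋₊ : K) * τ ≤ s := by
  rw [← le_div_iff₀ hτ]; exact Nat.floor_le (div_nonneg hs hτ.le)

theorem lt_floor_div_add_one_mul (hτ : 0 < τ) : s < ((⌊s / τ⌋₊ + 1 : ℕ) : K) * τ := by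
  rw [← div_lt_iff₀ hτ]; push_cast; exact Nat.lt_floor_add_one _

theorem floor_div_le_of_lt_add_one_mul {N : ℕ} (hτ : 0 < τ) (hs : s < (N + 1) * τ) :
    ⌊s / τ⌋₊ ≤ N :=
  Nat.lt_succ_iff.1 <| (Nat.floor_lt' N.succ_ne_zero).2 <| by
    rw [div_lt_iff₀ hτ]; exact_mod_cast hs

theorem floor_div_add_one_le_floor_div (hτ : 0 < τ) (hs : 0 ≤ s) (hss' : s + τ ≤ s') :
    ⌊s / τ⌋₊ + 1 ≤ ⌊s' / τ⌋₊ := by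
  rw [← Nat.floor_add_one (div_nonneg hs hτ.le)]
  exact Nat.floor_le_floor (by rwa [div_add_one hτ.ne', div_le_div_iff_of_pos_right hτ])

end Floor

theorem discInterp_eq_of_lt {X : Type*} (p : ℕ → X) {τ s : ℝ} {N : ℕ} (hτ : 0 < τ)
    (hs : s < (N + 1) * τ) : discInterp p τ N s = p ⌊s / τ⌋₊ := by
  rw [discInterp, min_eq_right (floor_div_le_of_lt_add_one_mul hτ hs)]

namespace IsDiscreteSol

variable {X : Type*} [NormedAddCommGroup X] {E : ℝ → X → ℝ} {Ψ : X → ℝ} {x₀ : X}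
  {ε τ T lam : ℝ} {N : ℕ} {p : ℕ → X}

theorem energy_le (hp : IsDiscreteSol E Ψ x₀ ε τ N p) (hΨ : ∀ v, 0 ≤ Ψ v) {i : ℕ} (hi : 1 ≤ i)
    (hiN : i ≤ N) {x : X} (hx : ‖x - p (i - 1)‖ ≤ ε) :
    E (i * τ) (p i) ≤ E (i * τ) x + Ψ (x - p (i - 1)) := by
  linarith [(hp.2 i hi hiN).2 x hx, hΨ (p i - p (i - 1))]

theorem antitoneOn_exp_neg_mul_energy (hp : IsDiscreteSol E Ψ x₀ ε τ N p) (hΨ : ∀ v, 0 ≤ Ψ v)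
    (hΨ0 : Ψ 0 = 0) (hε : 0 ≤ ε) (hτ : 0 ≤ τ) (hNT : N * τ ≤ T)
    (hanti : ∀ x, AntitoneOn (fun s => exp (-lam * s) * E s x) (Icc 0 T)) :
    AntitoneOn (fun m : ℕ => exp (-lam * (m * τ)) * E (m * τ) (p m)) (Iic N) := by
  have hmem : ∀ m ∈ Iic N, (m : ℝ) * τ ∈ Icc 0 T := fun m hm =>
    ⟨by positivity, le_trans (by gcongr; exact_mod_cast hm) hNT⟩
  refine antitoneOn_of_succ_le ordConnected_Iic fun m _ hm hm' => ?_
  rw [Order.succ_eq_add_one] at hm' ⊢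
  have hstay : E ((m + 1 : ℕ) * τ) (p (m + 1)) ≤ E ((m + 1 : ℕ) * τ) (p m) := by
    simpa [hΨ0] using hp.energy_le hΨ (by omega) hm' (x := p m) (by simpa using hε)
  calc exp (-lam * ((m + 1 : ℕ) * τ)) * E ((m + 1 : ℕ) * τ) (p (m + 1))
      ≤ exp (-lam * ((m + 1 : ℕ) * τ)) * E ((m + 1 : ℕ) * τ) (p m) := by gcongr
    _ ≤ exp (-lam * (m * τ)) * E (m * τ) (p m) :=
        hanti (p m) (hmem m hm) (hmem _ hm') (by gcongr; simp)

theorem exp_neg_mul_energy_le (hp : IsDiscreteSol E Ψ x₀ ε τ N p) (hΨ : ∀ v, 0 ≤ Ψ v)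
    (hΨ0 : Ψ 0 = 0) (hlam : 0 ≤ lam) (hτ : 0 < τ) (hNT : N * τ ≤ T ∧ T < (N + 1) * τ)
    (hanti : ∀ x, AntitoneOn (fun s => exp (-lam * s) * E s x) (Icc 0 T))
    {t t' : ℝ} (ht : 0 ≤ t) (htt' : t + τ < t') (ht' : t' ≤ T) {v : X} (hv : ‖v‖ ≤ ε) :
    exp (-lam * t') * E t' (discInterp p τ N t') ≤
      exp (-lam * t) * (E t (discInterp p τ N t + v) + Ψ v) := by
  set k := ⌊t / τ⌋₊
  set j := ⌊t' / τ⌋₊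
  have hk := lt_floor_div_add_one_mul (s := t) hτ
  have hkj : k + 1 ≤ j := floor_div_add_one_le_floor_div hτ ht htt'.le
  have hj := floor_div_mul_le hτ (s := t') (by linarith)
  have hjN : j ≤ N := floor_div_le_of_lt_add_one_mul hτ (by linarith)
  have hk' : ((k + 1 : ℕ) : ℝ) * τ ≤ j * τ := by gcongr
  rw [discInterp_eq_of_lt p hτ (by linarith), discInterp_eq_of_lt p hτ (by linarith)]
  have hstep := hp.energy_le hΨ (i := k + 1) (by omega) (by omega) (x := p k + v)
    (by simpa using hv)
  simp only [Nat.add_sub_cancel, add_sub_cancel_left] at hstep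
  calc exp (-lam * t') * E t' (p j)
      ≤ exp (-lam * (j * τ)) * E (j * τ) (p j) :=
        hanti (p j) ⟨by positivity, by linarith⟩ ⟨by linarith, ht'⟩ hj
    _ ≤ exp (-lam * ((k + 1 : ℕ) * τ)) * E ((k + 1 : ℕ) * τ) (p (k + 1)) :=
        hp.antitoneOn_exp_neg_mul_energy hΨ hΨ0 ((norm_nonneg v).trans hv) hτ.le hNT.1 hanti
          (by simp only [mem_Iic]; omega) hjN hkj
    _ ≤ exp (-lam * ((k + 1 : ℕ) * τ)) * E ((k + 1 : ℕ) * τ) (p k + v)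
          + exp (-lam * ((k + 1 : ℕ) * τ)) * Ψ v := by
        rw [← mul_add]; gcongr
    _ ≤ exp (-lam * t) * E t (p k + v) + exp (-lam * t) * Ψ v := by
        gcongr ?_ + ?_
        · exact hanti _ ⟨ht, by linarith⟩ ⟨by positivity, by linarith⟩ hk.le
        · exact mul_le_mul_of_nonneg_right (exp_le_exp.2 (by nlinarith)) (hΨ v)
    _ = exp (-lam * t) * (E t (p k + v) + Ψ v) := (mul_add _ _ _).symm

end IsDiscreteSol

theorem stmt_7_general
    {X : Type*} [NormedAddCommGroup X] [NormedSpace ℝ X]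
    (T : ℝ)
    (E Et : ℝ → X → ℝ) (DE : ℝ → X → X →L[ℝ] ℝ)
    (hEt : ∀ x : X, ∀ t ∈ Set.Icc (0:ℝ) T,
      HasDerivWithinAt (fun s => E s x) (Et t x) (Set.Icc 0 T) t)
    (hDE : ∀ t ∈ Set.Icc (0:ℝ) T, ∀ x : X, HasFDerivAt (fun y => E t y) (DE t x) x)
    (lam : ℝ) (hlam : 0 ≤ lam)
    (hEbound : ∀ s ∈ Set.Icc (0:ℝ) T, ∀ x : X, |Et s x| ≤ lam * E s x)
    (Ψ : X → ℝ) (hΨnn : ∀ v, 0 ≤ Ψ v)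
    (hΨhom : ∀ c : ℝ, 0 ≤ c → ∀ v : X, Ψ (c • v) = c * Ψ v)
    (x₀ : X) (ε : ℝ)
    (τ : ℕ → ℝ) (hτpos : ∀ n, 0 < τ n) (hτ0 : Filter.Tendsto τ Filter.atTop (nhds 0))
    (N : ℕ → ℕ) (hNT : ∀ n, (N n : ℝ) * τ n ≤ T ∧ T < ((N n : ℝ) + 1) * τ n)
    (pts : ℕ → ℕ → X) (hsol : ∀ n, IsDiscreteSol E Ψ x₀ ε (τ n) (N n) (pts n))
    (xe : ℝ → X)
    (hconv : ∀ t ∈ Set.Icc (0:ℝ) T,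
      Filter.Tendsto (fun n => discInterp (pts n) (τ n) (N n) t) Filter.atTop (nhds (xe t)))
    (t : ℝ) (ht : t ∈ Set.Ico (0:ℝ) T)
    (hrc : Filter.Tendsto xe (nhdsWithin t (Set.Ioi t)) (nhds (xe t))) :
    ∀ z : X, ‖z - xe t‖ ≤ ε → E t (xe t) ≤ E t z + Ψ (z - xe t) := by
  intro z hz
  have htT : t ∈ Icc 0 T := Ico_subset_Icc_self ht
  have hΨ0 : Ψ 0 = 0 := by simpa using hΨhom 0 le_rfl 0
  have hcont : ∀ s ∈ Icc 0 T, Continuous (E s) := fun s hs =>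
    continuous_iff_continuousAt.2 fun x => (hDE s hs x).continuousAt
  set C := E t z + Ψ (z - xe t)
  have hweighted : ∀ t' ∈ Ioo t T, exp (-lam * t') * E t' (xe t') ≤ exp (-lam * t) * C := by
    intro t' ht'
    have ht'T : t' ∈ Icc 0 T := ⟨ht.1.trans ht'.1.le, ht'.2.le⟩
    have hcompetitor : Tendsto (fun n => discInterp (pts n) (τ n) (N n) t + (z - xe t))
        atTop (𝓝 z) := by
      simpa using (hconv t htT).add_const (z - xe t)
    refine le_of_tendsto_of_tendsto
      ((((hcont t' ht'T).tendsto _).comp (hconv t' ht'T)).const_mul _)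
      (((((hcont t htT).tendsto z).comp hcompetitor).add_const _).const_mul _) ?_
    filter_upwards [hτ0.eventually_lt_const (sub_pos.2 ht'.1)] with n hn
    exact (hsol n).exp_neg_mul_energy_le hΨnn hΨ0 hlam (hτpos n) (hNT n)
      (antitoneOn_exp_neg_mul_energy hEt hEbound) ht.1 (by linarith) ht'.2.le hz
  exact energy_le_of_exp_neg_mul_energy_le hEt hEbound (hcont t htT) ht hrc hweighted

theorem stmt_7
    {X : Type*} [NormedAddCommGroup X] [NormedSpace ℝ X] [FiniteDimensional ℝ X]
    [Nontrivial X]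
    (T : ℝ) (hT : 0 < T)
    (E Et : ℝ → X → ℝ) (DE : ℝ → X → X →L[ℝ] ℝ)
    (hEnn : ∀ t ∈ Set.Icc (0:ℝ) T, ∀ x : X, 0 ≤ E t x)
    (hEt : ∀ x : X, ∀ t ∈ Set.Icc (0:ℝ) T,
      HasDerivWithinAt (fun s => E s x) (Et t x) (Set.Icc 0 T) t)
    (hDE : ∀ t ∈ Set.Icc (0:ℝ) T, ∀ x : X, HasFDerivAt (fun y => E t y) (DE t x) x)
    (hEtc : ContinuousOn (fun p : ℝ × X => Et p.1 p.2) (Set.Icc 0 T ×ˢ Set.univ))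
    (hDEc : ContinuousOn (fun p : ℝ × X => DE p.1 p.2) (Set.Icc 0 T ×ˢ Set.univ))
    (lam : ℝ) (hlam : 0 ≤ lam)
    (hEbound : ∀ s ∈ Set.Icc (0:ℝ) T, ∀ x : X, |Et s x| ≤ lam * E s x)
    (Ψ : X → ℝ) (hΨnn : ∀ v, 0 ≤ Ψ v) (hΨconv : ConvexOn ℝ Set.univ Ψ)
    (hΨhom : ∀ c : ℝ, 0 ≤ c → ∀ v : X, Ψ (c • v) = c * Ψ v)
    (hΨpos : ∀ v : X, v ≠ 0 → 0 < Ψ v)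
    (x₀ : X) (ε : ℝ) (hε : 0 < ε)
    (τ : ℕ → ℝ) (hτpos : ∀ n, 0 < τ n) (hτ0 : Filter.Tendsto τ Filter.atTop (nhds 0))
    (N : ℕ → ℕ) (hNT : ∀ n, (N n : ℝ) * τ n ≤ T ∧ T < ((N n : ℝ) + 1) * τ n)
    (pts : ℕ → ℕ → X) (hsol : ∀ n, IsDiscreteSol E Ψ x₀ ε (τ n) (N n) (pts n))
    (xe : ℝ → X)
    (hconv : ∀ t ∈ Set.Icc (0:ℝ) T,
      Filter.Tendsto (fun n => discInterp (pts n) (τ n) (N n) t) Filter.atTop (nhds (xe t)))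
    (t : ℝ) (ht : t ∈ Set.Ico (0:ℝ) T)
    (hrc : Filter.Tendsto xe (nhdsWithin t (Set.Ioi t)) (nhds (xe t))) :
    ∀ z : X, ‖z - xe t‖ ≤ ε → E t (xe t) ≤ E t z + Ψ (z - xe t) :=
  stmt_7_general T E Et DE hEt hDE lam hlam hEbound Ψ hΨnn hΨhom x₀ ε τ hτpos hτ0 N hNT pts hsol xe
    hconv t ht hrc
end

section
/- Let t' ∈ [0,T], ε > 0, x₀' ∈ ℝ^d, and suppose x₁ minimizes x ↦ E(t',x) + Ψ(x − x₀') over the closed ball {x : ‖x − x₀'‖ ≤ ε}. Then ⟨D_x E(t',x₁), x₁ − x₀'⟩ + Ψ(x₁ − x₀') ≤ 0. -/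
open Filter MeasureTheory Set
open scoped Topology NNReal

/-!
Along the segment `θ ↦ x₀ + θ • (x₁ - x₀)`, positive homogeneity makes the dissipation term the
linear function `θ * Ψ (x₁ - x₀)`, so the incremental functional restricted to `θ ∈ [0, 1]` is
differentiable and minimal at the endpoint `θ = 1`. Its derivative there,
`f' (x₁ - x₀) + Ψ (x₁ - x₀)`, is therefore nonpositive.
-/

theorem hasFDerivAt_add_le_zero_of_isMinOn_segment
    {X : Type*} [NormedAddCommGroup X] [NormedSpace ℝ X]
    {f : X → ℝ} {f' : X →L[ℝ] ℝ} {Ψ : X → ℝ} {s : Set X} {x₀ x₁ : X}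
    (hf : HasFDerivAt f f' x₁) (hΨhom : ∀ c : ℝ, 0 ≤ c → ∀ v : X, Ψ (c • v) = c * Ψ v)
    (hseg : segment ℝ x₀ x₁ ⊆ s) (hmin : IsMinOn (fun x => f x + Ψ (x - x₀)) s x₁) :
    f' (x₁ - x₀) + Ψ (x₁ - x₀) ≤ 0 := by
  set v := x₁ - x₀
  set φ : ℝ → ℝ := fun θ => f (x₀ + θ • v) + θ * Ψ v
  have hline : HasDerivAt (fun θ : ℝ => x₀ + θ • v) v 1 := by
    simpa using ((hasDerivAt_id (1 : ℝ)).smul_const v).const_add x₀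
  have hend : x₀ + v = x₁ := add_sub_cancel x₀ x₁
  have hderiv : HasDerivAt φ (f' v + Ψ v) 1 := by
    rw [← hend, ← one_smul ℝ v] at hf
    exact (hf.comp_hasDerivAt 1 hline).add (hasDerivAt_mul_const (Ψ v))
  have hφmin : IsMinOn φ (Icc 0 1) 1 := by
    intro θ hθ
    have hmem : x₀ + θ • v ∈ s := hseg (by rw [segment_eq_image']; exact ⟨θ, hθ, rfl⟩)
    have hle : f x₁ + Ψ v ≤ f (x₀ + θ • v) + Ψ (x₀ + θ • v - x₀) := hmin hmem
    rw [add_sub_cancel_left, hΨhom θ hθ.1] at hle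
    simpa [φ, hend] using hle
  have hdir : (0 : ℝ) - 1 ∈ posTangentConeAt (Icc 0 1) 1 :=
    sub_mem_posTangentConeAt_of_segment_subset
      ((segment_symm ℝ 1 0).trans (segment_eq_Icc zero_le_one)).subset
  have hslope : 0 ≤ (0 - 1) * (f' v + Ψ v) := by
    simpa using hφmin.localize.hasFDerivWithinAt_nonneg hderiv.hasDerivWithinAt hdir
  linarith

theorem stmt_14_general
    {X : Type*} [NormedAddCommGroup X] [NormedSpace ℝ X]
    (T : ℝ)
    (E : ℝ → X → ℝ) (DE : ℝ → X → X →L[ℝ] ℝ)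
    (hDE : ∀ t ∈ Set.Icc (0:ℝ) T, ∀ x : X, HasFDerivAt (fun y => E t y) (DE t x) x)
    (Ψ : X → ℝ)
    (hΨhom : ∀ c : ℝ, 0 ≤ c → ∀ v : X, Ψ (c • v) = c * Ψ v)
    (t' : ℝ) (ht' : t' ∈ Set.Icc (0:ℝ) T)
    (ε : ℝ) (x₀' x₁ : X)
    (hx₁mem : ‖x₁ - x₀'‖ ≤ ε)
    (hx₁min : ∀ x : X, ‖x - x₀'‖ ≤ ε →
      E t' x₁ + Ψ (x₁ - x₀') ≤ E t' x + Ψ (x - x₀')) :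
    DE t' x₁ (x₁ - x₀') + Ψ (x₁ - x₀') ≤ 0 := by
  have hseg : segment ℝ x₀' x₁ ⊆ Metric.closedBall x₀' ε :=
    (convex_closedBall x₀' ε).segment_subset
      (Metric.mem_closedBall_self ((norm_nonneg _).trans hx₁mem)) (mem_closedBall_iff_norm.mpr hx₁mem)
  exact hasFDerivAt_add_le_zero_of_isMinOn_segment (hDE t' ht' x₁) hΨhom hseg
    fun x hx => hx₁min x (mem_closedBall_iff_norm.mp hx)

theorem stmt_14
    {X : Type*} [NormedAddCommGroup X] [NormedSpace ℝ X] [FiniteDimensional ℝ X]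
    [Nontrivial X]
    (T : ℝ) (hT : 0 < T)
    (E Et : ℝ → X → ℝ) (DE : ℝ → X → X →L[ℝ] ℝ)
    (hEnn : ∀ t ∈ Set.Icc (0:ℝ) T, ∀ x : X, 0 ≤ E t x)
    (hEt : ∀ x : X, ∀ t ∈ Set.Icc (0:ℝ) T,
      HasDerivWithinAt (fun s => E s x) (Et t x) (Set.Icc 0 T) t)
    (hDE : ∀ t ∈ Set.Icc (0:ℝ) T, ∀ x : X, HasFDerivAt (fun y => E t y) (DE t x) x)
    (hEtc : ContinuousOn (fun p : ℝ × X => Et p.1 p.2) (Set.Icc 0 T ×ˢ Set.univ))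
    (hDEc : ContinuousOn (fun p : ℝ × X => DE p.1 p.2) (Set.Icc 0 T ×ˢ Set.univ))
    (Ψ : X → ℝ) (hΨnn : ∀ v, 0 ≤ Ψ v) (hΨconv : ConvexOn ℝ Set.univ Ψ)
    (hΨhom : ∀ c : ℝ, 0 ≤ c → ∀ v : X, Ψ (c • v) = c * Ψ v)
    (hΨpos : ∀ v : X, v ≠ 0 → 0 < Ψ v)
    (t' : ℝ) (ht' : t' ∈ Set.Icc (0:ℝ) T)
    (ε : ℝ) (hε : 0 < ε) (x₀' x₁ : X)
    (hx₁mem : ‖x₁ - x₀'‖ ≤ ε)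
    (hx₁min : ∀ x : X, ‖x - x₀'‖ ≤ ε →
      E t' x₁ + Ψ (x₁ - x₀') ≤ E t' x + Ψ (x - x₀')) :
    DE t' x₁ (x₁ - x₀') + Ψ (x₁ - x₀') ≤ 0 :=
  stmt_14_general T E DE hDE Ψ hΨhom t' ht' ε x₀' x₁ hx₁mem hx₁min
end

section
/- (Approximate optimal transition identity.) Assume in addition that the norm ‖·‖ is of class C¹ on ℝ^d ∖ {0} (the unit ball has C¹ boundary). Let t' ∈ [0,T], ε > 0, x₀' ∈ ℝ^d, and suppose x₁ minimizes x ↦ E(t',x) + Ψ(x − x₀') over the closed ball {x : ‖x − x₀'‖ ≤ ε}. Then ⟨−D_x E(t',x₁), x₁ − x₀'⟩ = Ψ(x₁ − x₀') + (inf_{η ∈ ∂Ψ(0)} ‖η + D_x E(t',x₁)‖_*) · ‖x₁ − x₀'‖, and the infimum over ∂Ψ(0) is attained. -/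
open Filter MeasureTheory Set
open scoped Topology NNReal

open Metric

/-! With `v = x₁ - x₀'` and `ξ = D_x E(t', x₁)`, first-order optimality turns the minimality
of `x₁` into the minimality of `v` for the sublinear function `G = ξ + Ψ` on the ball of radius `ε`.
By homogeneity, `G + μ ‖·‖ ≥ 0` everywhere with equality at `v`, where `μ = -G(v)/‖v‖ ≥ 0`.
Differentiating along `v + s w` then shows `-ξ - μ n ∈ ∂Ψ(0)`, where `n`, the derivative of the
norm at `v ≠ 0`, has dual norm one. Weak duality, `‖ξ + η‖ ‖v‖ ≥ ⟨-ξ, v⟩ - Ψ(v)` for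
`η ∈ ∂Ψ(0)`, shows that this `η` attains the infimum `μ`. -/

theorem nonneg_of_hasDerivAt_of_eventually_le {φ : ℝ → ℝ} {d : ℝ} (hφ : HasDerivAt φ d 0)
    (hmin : ∀ᶠ s in 𝓝[>] 0, φ 0 ≤ φ s) : 0 ≤ d := by
  refine ge_of_tendsto hφ.tendsto_slope_zero_right ?_
  filter_upwards [hmin, self_mem_nhdsWithin] with s hs (hs0 : 0 < s)
  simpa using mul_nonneg (inv_nonneg.2 hs0.le) (sub_nonneg.2 hs)

section Optimality

variable {X : Type*} [NormedAddCommGroup X] [NormedSpace ℝ X]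

theorem IsMinOn.isMinOn_add_of_hasFDerivAt {f g : X → ℝ} {f' : X →L[ℝ] ℝ} {s : Set X} {a : X}
    (hmin : IsMinOn (f + g) s a) (hf : HasFDerivAt f f' a) (hg : ConvexOn ℝ s g) (ha : a ∈ s) :
    IsMinOn (fun x => f' x + g x) s a := by
  refine isMinOn_iff.2 fun x hx => ?_
  set φ : ℝ → ℝ := fun t => f (a + t • (x - a)) + ((1 - t) * g a + t * g x)
  have hφ : HasDerivAt φ (f' (x - a) + (g x - g a)) 0 := by
    have hline : HasDerivAt (fun t : ℝ => a + t • (x - a)) (x - a) 0 := by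
      simpa using ((hasDerivAt_id (0 : ℝ)).smul_const (x - a)).const_add a
    have hf₀ : HasFDerivAt f f' (a + (0 : ℝ) • (x - a)) := by simpa using hf
    exact ((hf₀.comp_hasDerivAt 0 hline).add
      ((((hasDerivAt_id (0 : ℝ)).const_sub 1).mul_const (g a)).add
        ((hasDerivAt_id (0 : ℝ)).mul_const (g x)))).congr_deriv (by ring)
  have hφ_min : ∀ᶠ t in 𝓝[>] 0, φ 0 ≤ φ t := by
    filter_upwards [Ioo_mem_nhdsGT one_pos] with t ⟨ht0, ht1⟩
    have hseg : a + t • (x - a) = (1 - t) • a + t • x := by module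
    have hmem : a + t • (x - a) ∈ s := by
      rw [hseg]; exact hg.1 ha hx (by linarith) ht0.le (by ring)
    have hconv : g (a + t • (x - a)) ≤ (1 - t) * g a + t * g x := by
      rw [hseg]; exact hg.2 ha hx (by linarith) ht0.le (by ring)
    have := isMinOn_iff.1 hmin _ hmem
    simp only [Pi.add_apply] at this
    simp only [φ, zero_smul, add_zero, sub_zero, one_mul, zero_mul]
    linarith
  have := nonneg_of_hasDerivAt_of_eventually_le hφ hφ_min
  rw [map_sub] at this
  linarith

end Optimality

section Sublinear

variable {X : Type*} [NormedAddCommGroup X] [NormedSpace ℝ X] {G : X → ℝ}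

theorem ConvexOn.add_le_of_homogeneous (hconv : ConvexOn ℝ univ G)
    (hhom : ∀ c : ℝ, 0 ≤ c → ∀ u : X, G (c • u) = c * G u) (a b : X) :
    G (a + b) ≤ G a + G b := by
  have h := hconv.2 (mem_univ a) (mem_univ b) (by norm_num : (0 : ℝ) ≤ 1 / 2)
    (by norm_num : (0 : ℝ) ≤ 1 / 2) (by norm_num)
  have hab : a + b = (2 : ℝ) • ((1 / 2 : ℝ) • a + (1 / 2 : ℝ) • b) := by module
  rw [hab, hhom 2 (by norm_num)]
  simp only [smul_eq_mul] at h
  linarith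

theorem nonneg_of_forall_mem_sphere_nonneg (hhom : ∀ c : ℝ, 0 ≤ c → ∀ u : X, G (c • u) = c * G u)
    {r : ℝ} (hr : 0 < r) (h : ∀ u ∈ sphere (0 : X) r, 0 ≤ G u) (u : X) : 0 ≤ G u := by
  rcases eq_or_ne u 0 with rfl | hu
  · simpa using (hhom 0 le_rfl 0).ge
  have hu' : 0 < ‖u‖ := norm_pos_iff.2 hu
  have hsphere : (r / ‖u‖) • u ∈ sphere (0 : X) r := by
    rw [mem_sphere_zero_iff_norm, norm_smul, Real.norm_of_nonneg (by positivity),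
      div_mul_cancel₀ _ hu'.ne']
  have hscale : u = (‖u‖ / r) • (r / ‖u‖) • u := by
    rw [smul_smul, div_mul_div_cancel₀ hr.ne', div_self hu'.ne', one_smul]
  rw [hscale, hhom _ (by positivity)]
  exact mul_nonneg (by positivity) (h _ hsphere)

/-- A Lagrange multiplier rule for a sublinear `G` and a constraint `N` differentiable at `v`. -/
theorem nonneg_add_mul_of_forall_le {N : X → ℝ} {n : X →L[ℝ] ℝ} {v : X} {μ : ℝ}
    (hadd : ∀ a b : X, G (a + b) ≤ G a + G b)
    (hhom : ∀ c : ℝ, 0 ≤ c → ∀ u : X, G (c • u) = c * G u) (hN : HasFDerivAt N n v)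
    (hmin : ∀ u, G v + μ * N v ≤ G u + μ * N u) (w : X) : 0 ≤ G w + μ * n w := by
  set φ : ℝ → ℝ := fun s => G v + s * G w + μ * N (v + s • w)
  have hφ : HasDerivAt φ (G w + μ * n w) 0 := by
    have hline : HasDerivAt (fun s : ℝ => v + s • w) w 0 := by
      simpa using ((hasDerivAt_id (0 : ℝ)).smul_const w).const_add v
    have hN₀ : HasFDerivAt N n (v + (0 : ℝ) • w) := by simpa using hN
    exact ((((hasDerivAt_id (0 : ℝ)).mul_const (G w)).const_add (G v)).add
      ((hN₀.comp_hasDerivAt 0 hline).const_mul μ)).congr_deriv (by ring)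
  refine nonneg_of_hasDerivAt_of_eventually_le hφ ?_
  filter_upwards [self_mem_nhdsWithin] with s (hs : 0 < s)
  have hsub : G (v + s • w) ≤ G v + s * G w := (hadd _ _).trans_eq (by rw [hhom s hs.le])
  have := hmin (v + s • w)
  simp only [φ, zero_mul, add_zero, zero_smul]
  linarith

/-- On the sphere of radius `ε`, `G u ≥ G v ≥ G v · ε / ‖v‖` because `G v ≤ G 0 = 0`;
homogeneity spreads this to all `u`. -/
theorem sub_div_norm_mul_norm_nonneg_of_isMinOn
    (hhom : ∀ c : ℝ, 0 ≤ c → ∀ u : X, G (c • u) = c * G u) {ε : ℝ} (hε : 0 < ε) {v : X}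
    (hv : v ∈ closedBall (0 : X) ε) (hmin : IsMinOn G (closedBall 0 ε) v) (u : X) :
    0 ≤ G u - G v / ‖v‖ * ‖u‖ := by
  have hG0 : G 0 = 0 := by simpa using hhom 0 le_rfl 0
  have hGv : G v ≤ 0 := hG0 ▸ isMinOn_iff.1 hmin 0 (mem_closedBall_self hε.le)
  refine nonneg_of_forall_mem_sphere_nonneg (G := fun u => G u - G v / ‖v‖ * ‖u‖)
    (fun c hc u => ?_) hε (fun u hu => ?_) u
  · rw [hhom c hc, norm_smul, Real.norm_of_nonneg hc]
    ring
  · have hGu := isMinOn_iff.1 hmin u (sphere_subset_closedBall hu)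
    rw [mem_sphere_zero_iff_norm.1 hu]
    have hscale : G v / ‖v‖ * ε ≤ G v := by
      rcases eq_or_ne v 0 with rfl | hv0
      · simp [hG0]
      · have hv' : 0 < ‖v‖ := norm_pos_iff.2 hv0
        rw [div_mul_eq_mul_div, div_le_iff₀ hv']
        nlinarith [mem_closedBall_zero_iff.1 hv]
    linarith

end Sublinear

section Subdifferential

variable {X : Type*} [NormedAddCommGroup X] [NormedSpace ℝ X] {Ψ : X → ℝ} {ξ : X →L[ℝ] ℝ}

theorem add_clm_homogeneous (hΨhom : ∀ c : ℝ, 0 ≤ c → ∀ u : X, Ψ (c • u) = c * Ψ u)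
    (c : ℝ) (hc : 0 ≤ c) (u : X) : ξ (c • u) + Ψ (c • u) = c * (ξ u + Ψ u) := by
  rw [map_smul, hΨhom c hc, smul_eq_mul, mul_add]

/-- Weak duality: every `η' ∈ ∂Ψ(0)` has `‖ξ + η'‖ ‖v‖ ≥ ⟨-ξ, v⟩ - Ψ v`. -/
theorem isLeast_norm_add_of_mul_norm_le {η : X →L[ℝ] ℝ} {v : X} (hη : η ∈ subdiffZero Ψ)
    (hv : v ≠ 0) (h : ‖ξ + η‖ * ‖v‖ ≤ -ξ v - Ψ v) :
    IsLeast ((fun η => ‖ξ + η‖) '' subdiffZero Ψ) ‖ξ + η‖ := by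
  refine ⟨⟨η, hη, rfl⟩, ?_⟩
  rintro _ ⟨η', hη', rfl⟩
  have hdual : -ξ v - Ψ v ≤ ‖ξ + η'‖ * ‖v‖ :=
    calc -ξ v - Ψ v ≤ (ξ + η') (-v) := by
          simp only [map_neg, add_apply]
          linarith [hη' v]
      _ ≤ ‖ξ + η'‖ * ‖-v‖ := (le_abs_self _).trans ((ξ + η').le_opNorm _)
      _ = ‖ξ + η'‖ * ‖v‖ := by rw [norm_neg]
  exact le_of_mul_le_mul_right (h.trans hdual) (norm_pos_iff.2 hv)

theorem sub_smul_fderiv_norm_mem_subdiffZero (hΨadd : ∀ a b : X, Ψ (a + b) ≤ Ψ a + Ψ b)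
    (hΨhom : ∀ c : ℝ, 0 ≤ c → ∀ u : X, Ψ (c • u) = c * Ψ u) {ε : ℝ} (hε : 0 < ε) {v : X}
    (hv : v ∈ closedBall (0 : X) ε) (hv0 : v ≠ 0)
    (hmin : IsMinOn (fun u => ξ u + Ψ u) (closedBall 0 ε) v)
    (hdiff : DifferentiableAt ℝ (‖·‖) v) :
    -ξ - (-(ξ v + Ψ v) / ‖v‖) • fderiv ℝ (‖·‖) v ∈ subdiffZero Ψ := by
  have hGadd : ∀ a b : X, ξ (a + b) + Ψ (a + b) ≤ (ξ a + Ψ a) + (ξ b + Ψ b) := fun a b => by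
    rw [map_add]; linarith [hΨadd a b]
  have hGhom := add_clm_homogeneous (ξ := ξ) hΨhom
  have hGv : ξ v + Ψ v + (-(ξ v + Ψ v) / ‖v‖) * ‖v‖ = 0 := by
    rw [div_mul_cancel₀ _ (norm_ne_zero_iff.2 hv0), add_neg_cancel]
  have hmult := nonneg_add_mul_of_forall_le (G := fun u => ξ u + Ψ u) (N := (‖·‖)) hGadd hGhom
    hdiff.hasFDerivAt fun u => by
      have := sub_div_norm_mul_norm_nonneg_of_isMinOn hGhom hε hv hmin u
      rw [hGv, neg_div]
      linarith
  intro w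
  have := hmult w
  simp only [sub_apply, neg_apply, smul_apply, smul_eq_mul]
  linarith

theorem exists_isLeast_norm_add_of_isMinOn (hΨadd : ∀ a b : X, Ψ (a + b) ≤ Ψ a + Ψ b)
    (hΨhom : ∀ c : ℝ, 0 ≤ c → ∀ u : X, Ψ (c • u) = c * Ψ u) {ε : ℝ} (hε : 0 < ε) {v : X}
    (hv : v ∈ closedBall (0 : X) ε) (hmin : IsMinOn (fun u => ξ u + Ψ u) (closedBall 0 ε) v)
    (hdiff : v ≠ 0 → DifferentiableAt ℝ (‖·‖) v) :
    ∃ η ∈ subdiffZero Ψ, IsLeast ((fun η => ‖ξ + η‖) '' subdiffZero Ψ) ‖ξ + η‖ ∧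
      -ξ v = Ψ v + ‖ξ + η‖ * ‖v‖ := by
  have hGhom := add_clm_homogeneous (ξ := ξ) hΨhom
  have hΨ0 : Ψ 0 = 0 := by simpa using hΨhom 0 le_rfl 0
  rcases eq_or_ne v 0 with rfl | hv0
  · have hmem : -ξ ∈ subdiffZero Ψ := fun w => by
      have := sub_div_norm_mul_norm_nonneg_of_isMinOn hGhom hε hv hmin w
      simp only [map_zero, hΨ0, add_zero, norm_zero, div_zero, zero_mul, sub_zero] at this
      simp only [neg_apply]
      linarith
    refine ⟨-ξ, hmem, ⟨⟨-ξ, hmem, rfl⟩, ?_⟩, by simp [hΨ0]⟩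
    rintro _ ⟨η, -, rfl⟩
    simp
  · have hmem := sub_smul_fderiv_norm_mem_subdiffZero hΨadd hΨhom hε hv hv0 hmin (hdiff hv0)
    set μ := -(ξ v + Ψ v) / ‖v‖
    have hGv : ξ v + Ψ v ≤ 0 := by
      simpa [hΨ0] using isMinOn_iff.1 hmin 0 (mem_closedBall_self hε.le)
    have hμ : 0 ≤ μ := div_nonneg (by linarith) (norm_nonneg v)
    have : Nontrivial X := nontrivial_of_ne v 0 hv0
    have hnorm : ‖ξ + (-ξ - μ • fderiv ℝ (‖·‖) v)‖ = μ := by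
      rw [show ξ + (-ξ - μ • fderiv ℝ (‖·‖) v) = -(μ • fderiv ℝ (‖·‖) v) by abel, norm_neg,
        norm_smul, norm_fderiv_norm (hdiff hv0), Real.norm_of_nonneg hμ, mul_one]
    have hid : -ξ v = Ψ v + μ * ‖v‖ := by
      rw [div_mul_cancel₀ _ (norm_ne_zero_iff.2 hv0)]
      ring
    exact ⟨_, hmem, isLeast_norm_add_of_mul_norm_le hmem hv0 (by rw [hnorm]; linarith),
      by rw [hnorm]; exact hid⟩

end Subdifferential

theorem stmt_15_general
    {X : Type*} [NormedAddCommGroup X] [NormedSpace ℝ X]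
    (hnorm : ContDiffOn ℝ 1 (fun x : X => ‖x‖) {(0 : X)}ᶜ)
    (T : ℝ)
    (E : ℝ → X → ℝ) (DE : ℝ → X → X →L[ℝ] ℝ)
    (hDE : ∀ t ∈ Set.Icc (0:ℝ) T, ∀ x : X, HasFDerivAt (fun y => E t y) (DE t x) x)
    (Ψ : X → ℝ) (hΨconv : ConvexOn ℝ Set.univ Ψ)
    (hΨhom : ∀ c : ℝ, 0 ≤ c → ∀ v : X, Ψ (c • v) = c * Ψ v)
    (t' : ℝ) (ht' : t' ∈ Set.Icc (0:ℝ) T)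
    (ε : ℝ) (hε : 0 < ε) (x₀' x₁ : X)
    (hx₁mem : ‖x₁ - x₀'‖ ≤ ε)
    (hx₁min : ∀ x : X, ‖x - x₀'‖ ≤ ε →
      E t' x₁ + Ψ (x₁ - x₀') ≤ E t' x + Ψ (x - x₀')) :
    (-(DE t' x₁)) (x₁ - x₀') =
      Ψ (x₁ - x₀') + distToSubdiff Ψ (DE t' x₁) * ‖x₁ - x₀'‖ ∧
    ∃ η ∈ subdiffZero Ψ, ‖DE t' x₁ + η‖ = distToSubdiff Ψ (DE t' x₁) := by
  have hv : x₁ - x₀' ∈ closedBall (0 : X) ε := mem_closedBall_zero_iff.2 hx₁mem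
  have hmin : IsMinOn ((fun u => E t' (x₀' + u)) + Ψ) (closedBall 0 ε) (x₁ - x₀') :=
    isMinOn_iff.2 fun u hu => by
      simpa using hx₁min (x₀' + u) (by simpa using mem_closedBall_zero_iff.1 hu)
  have hE : HasFDerivAt (fun u => E t' (x₀' + u)) (DE t' x₁) (x₁ - x₀') :=
    (hasFDerivAt_comp_add_left x₀').2 (by simpa using hDE t' ht' x₁)
  have hdiff (hv0 : x₁ - x₀' ≠ 0) : DifferentiableAt ℝ (‖·‖) (x₁ - x₀') :=
    (hnorm.contDiffAt (isOpen_compl_singleton.mem_nhds hv0)).differentiableAt one_ne_zero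
  obtain ⟨η, hη, hleast, hid⟩ := exists_isLeast_norm_add_of_isMinOn
    (hΨconv.add_le_of_homogeneous hΨhom) hΨhom hε hv
    (hmin.isMinOn_add_of_hasFDerivAt hE (hΨconv.subset (subset_univ _) (convex_closedBall 0 ε)) hv)
    hdiff
  rw [distToSubdiff, hleast.csInf_eq]
  exact ⟨hid, η, hη, rfl⟩

theorem stmt_15
    {X : Type*} [NormedAddCommGroup X] [NormedSpace ℝ X] [FiniteDimensional ℝ X]
    [Nontrivial X]
    (hnorm : ContDiffOn ℝ 1 (fun x : X => ‖x‖) {(0 : X)}ᶜ)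
    (T : ℝ) (hT : 0 < T)
    (E Et : ℝ → X → ℝ) (DE : ℝ → X → X →L[ℝ] ℝ)
    (hEnn : ∀ t ∈ Set.Icc (0:ℝ) T, ∀ x : X, 0 ≤ E t x)
    (hEt : ∀ x : X, ∀ t ∈ Set.Icc (0:ℝ) T,
      HasDerivWithinAt (fun s => E s x) (Et t x) (Set.Icc 0 T) t)
    (hDE : ∀ t ∈ Set.Icc (0:ℝ) T, ∀ x : X, HasFDerivAt (fun y => E t y) (DE t x) x)
    (hEtc : ContinuousOn (fun p : ℝ × X => Et p.1 p.2) (Set.Icc 0 T ×ˢ Set.univ))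
    (hDEc : ContinuousOn (fun p : ℝ × X => DE p.1 p.2) (Set.Icc 0 T ×ˢ Set.univ))
    (Ψ : X → ℝ) (hΨnn : ∀ v, 0 ≤ Ψ v) (hΨconv : ConvexOn ℝ Set.univ Ψ)
    (hΨhom : ∀ c : ℝ, 0 ≤ c → ∀ v : X, Ψ (c • v) = c * Ψ v)
    (hΨpos : ∀ v : X, v ≠ 0 → 0 < Ψ v)
    (t' : ℝ) (ht' : t' ∈ Set.Icc (0:ℝ) T)
    (ε : ℝ) (hε : 0 < ε) (x₀' x₁ : X)
    (hx₁mem : ‖x₁ - x₀'‖ ≤ ε)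
    (hx₁min : ∀ x : X, ‖x - x₀'‖ ≤ ε →
      E t' x₁ + Ψ (x₁ - x₀') ≤ E t' x + Ψ (x - x₀')) :
    (-(DE t' x₁)) (x₁ - x₀') =
      Ψ (x₁ - x₀') + distToSubdiff Ψ (DE t' x₁) * ‖x₁ - x₀'‖ ∧
    ∃ η ∈ subdiffZero Ψ, ‖DE t' x₁ + η‖ = distToSubdiff Ψ (DE t' x₁) :=
  stmt_15_general hnorm T E DE hDE Ψ hΨconv hΨhom t' ht' ε hε x₀' x₁ hx₁mem hx₁min
end

section
/- For all t ∈ [0,2], one has E(t,y(t)) + y(t) − E(t,0) = (1/243)·(10 + √(10+90t))·(8 − 18t − √(10+90t)); in particular this quantity is strictly positive for 0 ≤ t < 1/6 and strictly negative for 1/6 < t ≤ 2. -/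
open Filter MeasureTheory Set
open scoped Topology NNReal

/-- The energy of the one-dimensional example. -/
noncomputable def Eex (t x : ℝ) : ℝ :=
  x ^ 2 - x ^ 4 + (3 / 10) * x ^ 6 + t * (1 - x ^ 2) - x + 6

/-- The nonzero local minimizer branch `y(t) = √(10 + √(10 + 90t)) / 3`. -/
noncomputable def yex (t : ℝ) : ℝ :=
  Real.sqrt (10 + Real.sqrt (10 + 90 * t)) / 3

theorem stmt_18 :
    ∀ t ∈ Set.Icc (0:ℝ) 2,
      Eex t (yex t) + yex t - Eex t 0 =
        (1 / 243) * (10 + Real.sqrt (10 + 90 * t)) *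
          (8 - 18 * t - Real.sqrt (10 + 90 * t)) ∧
      (t < 1 / 6 → 0 < Eex t (yex t) + yex t - Eex t 0) ∧
      (1 / 6 < t → Eex t (yex t) + yex t - Eex t 0 < 0) := by
  intro t ht
  obtain ⟨ht0, ht2⟩ := ht
  set s := Real.sqrt (10 + 90 * t) with hs
  have hsnn : 0 ≤ s := Real.sqrt_nonneg _
  have hs2 : s ^ 2 = 10 + 90 * t := Real.sq_sqrt (by linarith)
  have ht' : t = (s ^ 2 - 10) / 90 := by linarith
  have hq2 : (yex t) ^ 2 = (10 + s) / 9 := by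
    rw [yex, div_pow, Real.sq_sqrt (by linarith : (0:ℝ) ≤ 10 + s)]
    norm_num
  have h4 : (yex t) ^ 4 = ((10 + s) / 9) ^ 2 := by
    rw [show (yex t) ^ 4 = ((yex t) ^ 2) ^ 2 by ring, hq2]
  have h6 : (yex t) ^ 6 = ((10 + s) / 9) ^ 3 := by
    rw [show (yex t) ^ 6 = ((yex t) ^ 2) ^ 3 by ring, hq2]
  have key : Eex t (yex t) + yex t - Eex t 0 = (10 + s) ^ 2 * (5 - s) / 1215 := by
    simp only [Eex]
    rw [h6, h4, hq2]
    rw [ht']; ring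
  refine ⟨?_, ?_, ?_⟩
  · rw [key, ht']; ring
  · intro htlt
    rw [key]
    have hs5 : s < 5 := by nlinarith
    have h1 : (0:ℝ) < (10 + s) ^ 2 := by positivity
    have h2 : (0:ℝ) < 5 - s := by linarith
    positivity
  · intro htgt
    rw [key]
    have hs5 : 5 < s := by nlinarith
    apply div_neg_of_neg_of_pos _ (by norm_num)
    apply mul_neg_of_pos_of_neg (by positivity)
    linarith
end
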